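/- arXiv:2003.11324 — 6 statements merged into one kernel-verified Lean document; each statement's English description precedes it below -/
import Mathlib

section
/- Let G be a group acting transitively on finite nonempty sets A and B with |A| = M, |B| = N and M ≥ N. Suppose the number of G-orbits on A × B (under the diagonal action) equals N. Then every G-orbit on A × B has cardinality exactly M, for every a ∈ A there exists b ∈ B with Stab_G(a) ≤ Stab_G(b), and there exists a G-equivariant surjection φ : A → B. -/
/-!
Each orbit of `G` on `A × B` projects onto `A`, so it has at least `M` points; since the `N`
orbits partition the `M * N` points, each has exactly `M`. The projection of the orbit of a
point onto `A` is then an equivariant bijection, and composing its inverse with the projection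
onto `B` gives the equivariant surjection `A → B`, whose existence forces the stabilizer
inclusions.
-/

open MulAction Function

theorem MulActionHom.surjective_of_isPretransitive {M X Y : Type*} [Monoid M] [MulAction M X]
    [MulAction M Y] [Nonempty X] [IsPretransitive M Y] (f : X →[M] Y) : Surjective f := by
  obtain ⟨x⟩ := ‹Nonempty X›
  intro y
  obtain ⟨g, rfl⟩ := exists_smul_eq M (f x) y
  exact ⟨g • x, map_smul f g x⟩

section

variable {G X Y : Type*} [Group G] [MulAction G X] [MulAction G Y]

theorem MulActionHom.stabilizer_le_stabilizer_apply (f : X →[G] Y) (x : X) :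
    stabilizer G x ≤ stabilizer G (f x) := fun g hg => by
  rw [mem_stabilizer_iff, ← map_smul, mem_stabilizer_iff.mp hg]

namespace MulAction

instance (x : X) : Nonempty (orbit G x) := ⟨⟨x, mem_orbit_self x⟩⟩

def orbitVal (x : X) : orbit G x →[G] X where
  toFun := Subtype.val
  map_smul' _ _ := rfl

theorem card_orbit_eq_of_forall_le [Finite X] {m : ℕ} (hle : ∀ x : X, m ≤ Nat.card (orbit G x))
    (hcard : Nat.card (orbitRel.Quotient G X) * m = Nat.card X) (x : X) :
    Nat.card (orbit G x) = m := by
  have := Fintype.ofFinite (orbitRel.Quotient G X)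
  have hle' (ω : orbitRel.Quotient G X) : m ≤ Nat.card ω.orbit := by
    obtain ⟨x, rfl⟩ := Quotient.mk''_surjective ω
    rw [orbitRel.Quotient.orbit_mk]
    exact hle x
  have hsum : ∑ _ω : orbitRel.Quotient G X, m = ∑ ω : orbitRel.Quotient G X, Nat.card ω.orbit := by
    rw [Finset.sum_const, Finset.card_univ, smul_eq_mul, ← Nat.card_eq_fintype_card, hcard,
      Nat.card_congr (selfEquivSigmaOrbits' G X), Nat.card_sigma]
  rw [← orbitRel.Quotient.orbit_mk]
  exact ((Finset.sum_eq_sum_iff_of_le fun ω _ => hle' ω).mp hsum _ (Finset.mem_univ _)).symm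

end MulAction

end

section

variable {G A B : Type*} [Group G] [MulAction G A] [MulAction G B]

theorem MulAction.card_le_card_orbit_prod [IsPretransitive G A] [Finite A] [Finite B]
    (p : A × B) : Nat.card A ≤ Nat.card (orbit G p) :=
  Nat.card_le_card_of_surjective _
    ((MulActionHom.fst G A B).comp (orbitVal p)).surjective_of_isPretransitive

theorem MulAction.exists_surjective_mulActionHom_of_card_orbit_prod_eq [IsPretransitive G A]
    [IsPretransitive G B] [Finite A] [Finite B] (p : A × B)
    (h : Nat.card (orbit G p) = Nat.card A) : ∃ φ : A →[G] B, Surjective φ := by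
  let π := (MulActionHom.fst G A B).comp (orbitVal p)
  let e := Equiv.ofBijective π (π.surjective_of_isPretransitive.bijective_of_nat_card_le h.le)
  let πInv := π.inverse e.symm e.left_inv e.right_inv
  exact ⟨((MulActionHom.snd G A B).comp (orbitVal p)).comp πInv,
    ((MulActionHom.snd G A B).comp (orbitVal p)).surjective_of_isPretransitive.comp
      e.symm.surjective⟩

end

theorem stmt2_general (G : Type*) [Group G] (A B : Type*) [Fintype A] [Fintype B]
    [Nonempty A] [Nonempty B] [MulAction G A] [MulAction G B]
    [MulAction.IsPretransitive G A] [MulAction.IsPretransitive G B]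
    (M N : ℕ) (hM : Fintype.card A = M) (hN : Fintype.card B = N)
    (horb : Nat.card (MulAction.orbitRel.Quotient G (A × B)) = N) :
    (∀ p : A × B, Nat.card (MulAction.orbit G p) = M) ∧
    (∀ a : A, ∃ b : B, MulAction.stabilizer G a ≤ MulAction.stabilizer G b) ∧
    (∃ φ : A → B, Function.Surjective φ ∧ ∀ (g : G) (a : A), φ (g • a) = g • φ a) := by
  rw [← Nat.card_eq_fintype_card] at hM hN
  have horbit (p : A × B) : Nat.card (MulAction.orbit G p) = M :=
    card_orbit_eq_of_forall_le (fun q => hM ▸ card_le_card_orbit_prod q)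
      (by rw [horb, Nat.card_prod, hM, hN, mul_comm]) p
  obtain ⟨φ, hφ⟩ := exists_surjective_mulActionHom_of_card_orbit_prod_eq
    (Classical.arbitrary (A × B)) (hM ▸ horbit _)
  exact ⟨horbit, fun a => ⟨φ a, φ.stabilizer_le_stabilizer_apply a⟩, φ, hφ, map_smul φ⟩

/-- If `G` acts transitively on finite nonempty sets `A` and `B` with `|A| = M ≥ N = |B|`
and has exactly `N` orbits on `A × B`, then every orbit on `A × B` has cardinality `M`,
every point stabilizer of `A` is contained in a point stabilizer of `B`, and there is a
`G`-equivariant surjection `A → B`. -/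
theorem stmt2 (G : Type*) [Group G] (A B : Type*) [Fintype A] [Fintype B]
    [Nonempty A] [Nonempty B] [MulAction G A] [MulAction G B]
    [MulAction.IsPretransitive G A] [MulAction.IsPretransitive G B]
    (M N : ℕ) (hM : Fintype.card A = M) (hN : Fintype.card B = N) (hMN : N ≤ M)
    (horb : Nat.card (MulAction.orbitRel.Quotient G (A × B)) = N) :
    (∀ p : A × B, Nat.card (MulAction.orbit G p) = M) ∧
    (∀ a : A, ∃ b : B, MulAction.stabilizer G a ≤ MulAction.stabilizer G b) ∧
    (∃ φ : A → B, Function.Surjective φ ∧ ∀ (g : G) (a : A), φ (g • a) = g • φ a) :=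
  stmt2_general G A B M N hM hN horb
end

section
/- Let G be a group acting transitively on finite nonempty sets A and B with |A| = M, |B| = N and M > N ≥ 2. Suppose the number of G-orbits on A × B (under the diagonal action) equals N. Then G does not act transitively on the set of 2-element subsets of A; in other words, the action of G on A is not 2-homogeneous. -/
/-!
Fix `a₀ ∈ A`. Since `G` is transitive on `A`, every orbit of `G` on `A × B` meets `{a₀} × B`;
as there are exactly `|B|` orbits, each meets it once, so the stabilizer of `a₀` fixes every
point of `B`. Hence `g • a₀ ↦ g • b₀` is a well-defined `G`-equivariant surjection `A → B`.
Because `|A| > |B| ≥ 2`, some pair of points of `A` lies in one fibre of this map and some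
other pair does not, and no group element can map the first pair to the second.
-/

open Pointwise MulAction

def IsTwoHomogeneous (G A : Type*) [Group G] [MulAction G A] [DecidableEq A] : Prop :=
  ∀ S T : Finset A, S.card = 2 → T.card = 2 → ∃ g : G, g • S = T

section

variable {G A B : Type*} [Group G] [MulAction G A] [MulAction G B]

theorem stabilizer_le_of_card_orbitRel_quotient_prod [IsPretransitive G A] [Finite B]
    (horb : Nat.card (orbitRel.Quotient G (A × B)) = Nat.card B) (a : A) (b : B) :
    stabilizer G a ≤ stabilizer G b := by
  intro g (hg : g • a = a)
  let f : B → orbitRel.Quotient G (A × B) := fun b ↦ ⟦(a, b)⟧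
  have hf : Function.Surjective f := by
    rintro ⟨a', b'⟩
    obtain ⟨h, rfl⟩ := exists_smul_eq G a a'
    exact ⟨h⁻¹ • b', Quotient.sound ⟨h⁻¹, by simp⟩⟩
  have hfg : f (g • b) = f b := Quotient.sound ⟨g, by simp [hg]⟩
  exact (hf.bijective_of_nat_card_le horb.ge).1 hfg

theorem exists_surjective_mulActionHom_of_stabilizer_le [IsPretransitive G A]
    [IsPretransitive G B] {a₀ : A} {b₀ : B} (h : stabilizer G a₀ ≤ stabilizer G b₀) :
    ∃ φ : A →[G] B, Function.Surjective φ := by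
  choose σ hσ using fun a : A ↦ exists_smul_eq G a₀ a
  have hφ (g : G) : σ (g • a₀) • b₀ = g • b₀ := by
    have : g⁻¹ * σ (g • a₀) ∈ stabilizer G b₀ := h <| by
      rw [mem_stabilizer_iff, mul_smul, hσ, inv_smul_smul]
    rwa [mem_stabilizer_iff, mul_smul, inv_smul_eq_iff] at this
  refine ⟨⟨fun a ↦ σ a • b₀, fun g a ↦ ?_⟩, fun b ↦ ?_⟩
  · obtain ⟨h, rfl⟩ := exists_smul_eq G a₀ a
    simp only [id, hφ, ← mul_smul]
  · obtain ⟨g, rfl⟩ := exists_smul_eq G b₀ b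
    exact ⟨g • a₀, hφ g⟩

theorem MulActionHom.not_isTwoHomogeneous [DecidableEq A] (φ : A →[G] B) {x y u v : A}
    (hxy : x ≠ y) (hφxy : φ x = φ y) (hφuv : φ u ≠ φ v) : ¬ IsTwoHomogeneous G A := by
  intro h
  obtain ⟨g, hg⟩ :=
    h {x, y} {u, v} (Finset.card_pair hxy) (Finset.card_pair (ne_of_apply_ne φ hφuv))
  have hfibre : ∀ z ∈ g • ({x, y} : Finset A), φ z = g • φ x := by
    intro z hz
    obtain ⟨w, hw, rfl⟩ := Finset.mem_smul_finset.mp hz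
    simp only [Finset.mem_insert, Finset.mem_singleton] at hw
    rcases hw with rfl | rfl <;> simp [hφxy]
  rw [hg] at hfibre
  exact hφuv ((hfibre u (by simp)).trans (hfibre v (by simp)).symm)

end

theorem stmt3_general (G : Type*) [Group G] (A B : Type*) [Fintype A] [Fintype B] [DecidableEq A]
    [Nonempty A] [MulAction G A] [MulAction G B]
    [MulAction.IsPretransitive G A] [MulAction.IsPretransitive G B]
    (M N : ℕ) (hM : Fintype.card A = M) (hN : Fintype.card B = N)
    (hMN : N < M) (hN2 : 2 ≤ N)
    (horb : Nat.card (MulAction.orbitRel.Quotient G (A × B)) = N) :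
    ¬ (∀ S T : Finset A, S.card = 2 → T.card = 2 → ∃ g : G, g • S = T) := by
  obtain ⟨a₀⟩ := ‹Nonempty A›
  have : Nontrivial B := Fintype.one_lt_card_iff_nontrivial.mp (by omega)
  obtain ⟨b₀, b₁, hb⟩ := exists_pair_ne B
  obtain ⟨φ, hφ⟩ := exists_surjective_mulActionHom_of_stabilizer_le <|
    stabilizer_le_of_card_orbitRel_quotient_prod
      (by rw [horb, Nat.card_eq_fintype_card, hN]) a₀ b₀
  obtain ⟨x, y, hxy, hφxy⟩ := Fintype.exists_ne_map_eq_of_card_lt φ (by omega)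
  obtain ⟨u, rfl⟩ := hφ b₀
  obtain ⟨v, rfl⟩ := hφ b₁
  exact φ.not_isTwoHomogeneous hxy hφxy hb

/-- If `G` acts transitively on finite nonempty sets `A` and `B` with `|A| = M > N = |B| ≥ 2`
and has exactly `N` orbits on `A × B`, then the action of `G` on `A` is not `2`-homogeneous,
i.e. `G` is not transitive on `2`-element subsets of `A`. -/
theorem stmt3 (G : Type*) [Group G] (A B : Type*) [Fintype A] [Fintype B] [DecidableEq A]
    [Nonempty A] [Nonempty B] [MulAction G A] [MulAction G B]
    [MulAction.IsPretransitive G A] [MulAction.IsPretransitive G B]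
    (M N : ℕ) (hM : Fintype.card A = M) (hN : Fintype.card B = N)
    (hMN : N < M) (hN2 : 2 ≤ N)
    (horb : Nat.card (MulAction.orbitRel.Quotient G (A × B)) = N) :
    ¬ (∀ S T : Finset A, S.card = 2 → T.card = 2 → ∃ g : G, g • S = T) :=
  stmt3_general G A B M N hM hN hMN hN2 horb
end

section
/- Let n ≥ 7 and let H ≤ S_n be a subgroup that fixes pointwise a set B ⊆ {1,…,n} of cardinality r ≥ 1; set A = {1,…,n} \ B. Let d be an integer with r < d ≤ (n−r)/2 such that O_r(H) = O_{r+1}(H) = ⋯ = O_d(H). Then H acts d-homogeneously on A. -/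
/-!
Let `a m` be the number of orbits of `H` on the `m`-subsets of `A = Bᶜ`. Since `H` fixes `B`
pointwise, `S ↦ (S ∩ B, S \ B)` is `H`-equivariant, so `O_k(H) = ∑ j, (r choose j) * a (k - j)`.
By the Livingstone–Wagner argument `a` is nondecreasing up to `|A| / 2`: the inclusion matrix `W`
of `m`-sets in `(m+1)`-sets satisfies `WᵀW = VVᵀ + (|A| - 2m) I`, with `V` the inclusion matrix
one level down, so it is injective, and it maps `H`-invariant functions to `H`-invariant functions.
Hence each term of `O_{k+1} - O_k = ∑ j, (r choose j) * (a (k + 1 - j) - a (k - j))` vanishes,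
and for `r ≤ k < d` this gives `a 0 = a 1 = ⋯ = a d`, while `a 0 = 1`.
-/

open Pointwise

/-- The number of orbits of a group `H` acting on a finite set `Ω` on the collection
of finsets of `Ω` satisfying the predicate `P` (for the induced action on finsets). -/
noncomputable def numOrbits (H : Type*) [Group H] {Ω : Type*} [DecidableEq Ω] [MulAction H Ω]
    (P : Finset Ω → Prop) : ℕ :=
  Nat.card (Quot (fun S T : {S : Finset Ω // P S} => ∃ h : H, h • S.val = T.val))

/-- A subgroup `H` of `Sym(Ω)` acts `d`-homogeneously on `A ⊆ Ω` if it is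
transitive on `d`-element subsets of `A`. -/
def IsHomogeneousOn {Ω : Type*} [DecidableEq Ω] (H : Subgroup (Equiv.Perm Ω))
    (A : Finset Ω) (d : ℕ) : Prop :=
  ∀ S T : Finset Ω, S ⊆ A → T ⊆ A → S.card = d → T.card = d → ∃ h ∈ H, h • S = T

open Finset Matrix

theorem Matrix.injective_mulVec_of_transpose_mul_self_eq {R m n p : Type*} [Field R] [LinearOrder R]
    [IsStrictOrderedRing R] [Fintype m] [Fintype n] [Fintype p] [DecidableEq n]
    (W : Matrix m n R) (V : Matrix n p R) {c : R} (hc : 0 < c) (h : Wᵀ * W = V * Vᵀ + c • 1) :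
    Function.Injective W.mulVec := by
  refine (injective_iff_map_eq_zero W.mulVecLin).2 fun v (hv : W *ᵥ v = 0) => ?_
  have key : (Vᵀ *ᵥ v) ⬝ᵥ (Vᵀ *ᵥ v) + c * (v ⬝ᵥ v) = 0 := by
    calc (Vᵀ *ᵥ v) ⬝ᵥ (Vᵀ *ᵥ v) + c * (v ⬝ᵥ v) = v ⬝ᵥ ((Wᵀ * W) *ᵥ v) := by
          rw [h, add_mulVec, dotProduct_add, ← mulVec_mulVec, dotProduct_mulVec, ← mulVec_transpose,
            transpose_transpose, smul_mulVec, one_mulVec, dotProduct_smul, smul_eq_mul,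
            dotProduct_comm]
      _ = 0 := by rw [← mulVec_mulVec, hv, mulVec_zero, dotProduct_zero]
  have hv0 : v ⬝ᵥ v = 0 := by
    have h₁ : 0 ≤ (Vᵀ *ᵥ v) ⬝ᵥ (Vᵀ *ᵥ v) := sum_nonneg fun i _ => mul_self_nonneg _
    have h₂ : 0 ≤ v ⬝ᵥ v := sum_nonneg fun i _ => mul_self_nonneg _
    nlinarith
  exact dotProduct_self_eq_zero.1 hv0

theorem Finset.card_filter_powersetCard_union_subset {α : Type*} [DecidableEq α]
    {A S S' : Finset α} {k : ℕ} (hS : S ∈ A.powersetCard (k + 1))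
    (hS' : S' ∈ A.powersetCard (k + 1)) :
    (#{T ∈ A.powersetCard (k + 2) | S ∪ S' ⊆ T} : ℚ)
      = #{R ∈ A.powersetCard k | R ⊆ S ∩ S'} + if S = S' then (#A : ℚ) - 2 * (k + 1) else 0 := by
  obtain ⟨hSA, hScard⟩ := mem_powersetCard.1 hS
  obtain ⟨hS'A, hS'card⟩ := mem_powersetCard.1 hS'
  have hsub : {R ∈ A.powersetCard k | R ⊆ S ∩ S'} = (S ∩ S').powersetCard k := by
    ext R
    simp only [mem_filter, mem_powersetCard]
    exact ⟨fun h => ⟨h.2, h.1.2⟩, fun h => ⟨⟨h.1.trans (inter_subset_left.trans hSA), h.2⟩, h.1⟩⟩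
  rw [hsub, card_powersetCard]
  by_cases hSS' : S = S'
  · subst hSS'
    rw [union_self, inter_self, if_pos rfl,
      card_filter_powersetCard_subset S A (k + 2) hSA (by omega), hScard,
      show k + 2 - (k + 1) = 1 by omega, Nat.choose_one_right, Nat.choose_succ_self_right,
      Nat.cast_sub (hScard ▸ card_le_card hSA)]
    push_cast
    ring
  · rw [if_neg hSS', add_zero]
    have hinter : #(S ∩ S') ≤ k := by
      by_contra! h
      have h₁ := eq_of_subset_of_card_le (inter_subset_left (s₁ := S) (s₂ := S')) (by omega)
      have h₂ := eq_of_subset_of_card_le (inter_subset_right (s₁ := S) (s₂ := S')) (by omega)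
      exact hSS' (h₁.symm.trans h₂)
    have hunion := card_union_add_card_inter S S'
    rcases hinter.eq_or_lt with hinter | hinter
    · rw [card_filter_powersetCard_subset _ A (k + 2) (union_subset hSA hS'A) (by omega), hinter,
        show k + 2 - #(S ∪ S') = 0 by omega, Nat.choose_zero_right, Nat.choose_self]
    · rw [Nat.choose_eq_zero_of_lt hinter, card_eq_zero.2, Nat.cast_zero]
      refine filter_eq_empty_iff.2 fun T hT hST => ?_
      have := card_le_card hST
      rw [(mem_powersetCard.1 hT).2] at this
      omega

section Orbits

variable {G Ω : Type*} [Group G] [MulAction G Ω] [DecidableEq Ω]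

variable (G) in
def orbitSetoid (P : Finset Ω → Prop) : Setoid {S // P S} where
  r S T := ∃ g : G, g • S.val = T.val
  iseqv :=
    ⟨fun _ => ⟨1, one_smul G _⟩, fun ⟨g, hg⟩ => ⟨g⁻¹, by rw [← hg, inv_smul_smul]⟩,
      fun ⟨g, hg⟩ ⟨g', hg'⟩ => ⟨g' * g, by rw [mul_smul, hg, hg']⟩⟩

theorem numOrbits_eq_card_quotient (P : Finset Ω → Prop) :
    numOrbits G P = Nat.card (Quotient (orbitSetoid G P)) :=
  rfl

theorem numOrbits_eq_one_iff {P : Finset Ω → Prop} :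
    numOrbits G P = 1 ↔ (∃ S, P S) ∧ ∀ S T, P S → P T → ∃ g : G, g • S = T := by
  rw [numOrbits_eq_card_quotient, Nat.card_eq_one_iff_unique]
  constructor
  · rintro ⟨hsub, ⟨q⟩⟩
    exact ⟨Quotient.inductionOn q fun S => ⟨S.1, S.2⟩, fun S T hS hT =>
      Quotient.exact (Subsingleton.elim (Quotient.mk _ ⟨S, hS⟩ : Quotient (orbitSetoid G P))
        (Quotient.mk _ ⟨T, hT⟩))⟩
  · rintro ⟨⟨S, hS⟩, htrans⟩
    exact ⟨⟨fun x y => Quotient.inductionOn₂ x y fun S T => Quotient.sound (htrans _ _ S.2 T.2)⟩,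
      ⟨Quotient.mk _ ⟨S, hS⟩⟩⟩

theorem numOrbits_pos [Fintype Ω] {P : Finset Ω → Prop} (h : ∃ S, P S) : 0 < numOrbits G P := by
  obtain ⟨S, hS⟩ := h
  rw [numOrbits_eq_card_quotient]
  have : Nonempty (Quotient (orbitSetoid G P)) := ⟨Quotient.mk _ ⟨S, hS⟩⟩
  exact Nat.card_pos

theorem numOrbits_congr {P Q : Finset Ω → Prop} (e : {S // P S} ≃ {S // Q S})
    (he : ∀ S T, (∃ g : G, g • S.val = T.val) ↔ ∃ g : G, g • (e S).val = (e T).val) :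
    numOrbits G P = numOrbits G Q :=
  Nat.card_congr (Quotient.congr (ra := orbitSetoid G P) (rb := orbitSetoid G Q) e he)

theorem numOrbits_eq_sum_fiberwise [Fintype Ω] {β : Type*} [DecidableEq β] {P : Finset Ω → Prop}
    (φ : Finset Ω → β) (hφ : ∀ (g : G) S, φ (g • S) = φ S) {s : Finset β}
    (hs : ∀ S, P S → φ S ∈ s) :
    numOrbits G P = ∑ b ∈ s, numOrbits G (fun S => P S ∧ φ S = b) := by
  classical
  let Φ : Quotient (orbitSetoid G P) → β :=
    Quotient.lift (fun S => φ S.val) (by rintro S T ⟨g, hg⟩; rw [← hg, hφ])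
  have hfiber (b : β) : numOrbits G (fun S => P S ∧ φ S = b) = Nat.card {q // Φ q = b} := by
    rw [numOrbits_eq_card_quotient]
    refine Nat.card_eq_of_bijective
      (Quotient.lift (fun S => ⟨Quotient.mk _ ⟨S.1, S.2.1⟩, S.2.2⟩)
        fun S T h => Subtype.ext (Quotient.sound h)) ⟨?_, ?_⟩
    · refine fun x y => Quotient.inductionOn₂ x y fun S T h => Quotient.sound ?_
      exact Quotient.exact (s := orbitSetoid G P) (congrArg Subtype.val h)
    · rintro ⟨q, hq⟩
      induction q using Quotient.inductionOn with
      | h S => exact ⟨Quotient.mk _ ⟨S.1, S.2, hq⟩, rfl⟩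
  have := Fintype.ofFinite (Quotient (orbitSetoid G P))
  rw [numOrbits_eq_card_quotient, Nat.card_eq_fintype_card, ← card_univ,
    card_eq_sum_card_fiberwise (f := Φ) (t := s) fun q _ => ?_]
  · refine sum_congr rfl fun b _ => ?_
    rw [hfiber, Nat.card_eq_fintype_card, Fintype.card_subtype]
  · induction q using Quotient.inductionOn with
    | h S => exact hs S.1 S.2

end Orbits

section Inclusion

variable {Ω : Type*} [DecidableEq Ω]

def inclusionMatrix (P Q : Finset Ω → Prop) : Matrix {T // Q T} {S // P S} ℚ :=
  of fun T S => if S.val ⊆ T.val then 1 else 0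

variable {G : Type*} [Group G] [MulAction G Ω] [Fintype Ω]

/-- Functions on the orbits are the `G`-invariant functions, and `W` maps invariant functions on
`P`-sets injectively to invariant functions on `Q`-sets. -/
theorem numOrbits_le_of_injective_mulVec {P Q : Finset Ω → Prop} [Fintype {S // P S}]
    (hP : ∀ (g : G) S, P S → P (g • S)) (hW : Function.Injective (inclusionMatrix P Q).mulVec) :
    numOrbits G P ≤ numOrbits G Q := by
  let W := inclusionMatrix P Q
  let L (R : Finset Ω → Prop) : (Quotient (orbitSetoid G R) → ℚ) →ₗ[ℚ] ({S // R S} → ℚ) :=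
    LinearMap.funLeft ℚ ℚ (Quotient.mk _)
  have hL (R : Finset Ω → Prop) : Function.Injective (L R) :=
    LinearMap.funLeft_injective_of_surjective _ _ _ Quotient.mk_surjective
  have hrange : LinearMap.range (W.mulVecLin ∘ₗ L P) ≤ LinearMap.range (L Q) := by
    rintro _ ⟨φ, rfl⟩
    refine ⟨Quotient.lift (W *ᵥ (φ ∘ Quotient.mk _)) ?_, rfl⟩
    rintro T T' ⟨g, hg⟩
    let e : {S // P S} ≃ {S // P S} := (MulAction.toPerm g).subtypeEquiv fun S =>
      ⟨hP g S, fun h => by simpa using hP g⁻¹ _ h⟩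
    simp only [W, mulVec, dotProduct, inclusionMatrix, of_apply, Function.comp_apply]
    conv_rhs => rw [← e.sum_comp]
    refine sum_congr rfl fun S _ => ?_
    simp only [e, ← hg, Equiv.subtypeEquiv_apply, MulAction.toPerm_apply,
      smul_finset_subset_smul_finset_iff]
    congr 2
    exact Quotient.sound ⟨g, rfl⟩
  have := Fintype.ofFinite (Quotient (orbitSetoid G P))
  have := Fintype.ofFinite (Quotient (orbitSetoid G Q))
  rw [numOrbits_eq_card_quotient, numOrbits_eq_card_quotient, Nat.card_eq_fintype_card,
    Nat.card_eq_fintype_card, ← Module.finrank_fintype_fun_eq_card ℚ,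
    ← Module.finrank_fintype_fun_eq_card ℚ,
    ← LinearMap.finrank_range_of_inj (f := W.mulVecLin ∘ₗ L P) (hW.comp (hL P)),
    ← LinearMap.finrank_range_of_inj (hL Q)]
  exact Submodule.finrank_mono hrange

end Inclusion

section PowersetCard

variable {Ω : Type*} [DecidableEq Ω]

abbrev powersetCardInclusion (A : Finset Ω) (k : ℕ) :
    Matrix (A.powersetCard (k + 1)) (A.powersetCard k) ℚ :=
  inclusionMatrix (· ∈ A.powersetCard k) (· ∈ A.powersetCard (k + 1))

theorem powersetCardInclusion_transpose_mul_self (A : Finset Ω) (k : ℕ) :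
    (powersetCardInclusion A (k + 1))ᵀ * powersetCardInclusion A (k + 1)
      = powersetCardInclusion A k * (powersetCardInclusion A k)ᵀ
        + ((#A : ℚ) - 2 * (k + 1)) • 1 := by
  ext S S'
  rw [Matrix.add_apply, Matrix.smul_apply, one_apply, mul_apply, mul_apply]
  simp only [transpose_apply, inclusionMatrix, of_apply, ite_zero_mul_ite_zero, mul_one,
    ← union_subset_iff, ← subset_inter_iff]
  simp only [smul_eq_mul, mul_boole, Subtype.ext_iff]
  rw [sum_coe_sort (A.powersetCard (k + 2)) fun T => if S.1 ∪ S'.1 ⊆ T then (1 : ℚ) else 0,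
    sum_coe_sort (A.powersetCard k) fun R => if R ⊆ S.1 ∩ S'.1 then (1 : ℚ) else 0,
    sum_boole, sum_boole]
  exact card_filter_powersetCard_union_subset S.2 S'.2

end PowersetCard

section LivingstoneWagner

variable {G Ω : Type*} [Group G] [MulAction G Ω] [DecidableEq Ω]

theorem numOrbits_powersetCard_zero (A : Finset Ω) : numOrbits G (· ∈ A.powersetCard 0) = 1 :=
  numOrbits_eq_one_iff.2 ⟨⟨∅, by simp⟩, fun S T hS hT => ⟨1, by simp_all⟩⟩

theorem numOrbits_powersetCard_le_succ [Fintype Ω] {A : Finset Ω} (hA : ∀ g : G, g • A = A)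
    {m : ℕ} (hm : 2 * (m + 1) ≤ #A) :
    numOrbits G (· ∈ A.powersetCard m) ≤ numOrbits G (· ∈ A.powersetCard (m + 1)) := by
  rcases m with _ | k
  · rw [numOrbits_powersetCard_zero]
    exact numOrbits_pos (powersetCard_nonempty.2 (by omega))
  · refine numOrbits_le_of_injective_mulVec (fun g S hS => ?_) ?_
    · obtain ⟨hSA, hScard⟩ := mem_powersetCard.1 hS
      exact mem_powersetCard.2
        ⟨hA g ▸ smul_finset_subset_smul_finset hSA, (card_smul_finset g S).trans hScard⟩
    · have hA' : (2 * (k + 2) : ℚ) ≤ #A := by exact_mod_cast hm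
      exact injective_mulVec_of_transpose_mul_self_eq _ _ (by linarith)
        (powersetCardInclusion_transpose_mul_self A k)

end LivingstoneWagner

section FixedSet

variable {G Ω : Type*} [Group G] [MulAction G Ω] [DecidableEq Ω] {B : Finset Ω}

theorem smul_finset_eq_self_of_subset (hfix : ∀ (g : G), ∀ b ∈ B, g • b = b) (g : G)
    {J : Finset Ω} (hJ : J ⊆ B) : g • J = J := by
  rw [smul_finset_def]
  exact (image_congr fun x hx => hfix g x (hJ hx)).trans image_id

theorem smul_finset_inter_eq (hfix : ∀ (g : G), ∀ b ∈ B, g • b = b) (g : G) (S : Finset Ω) :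
    g • S ∩ B = S ∩ B := by
  conv_lhs => rw [← smul_finset_eq_self_of_subset hfix g (subset_refl B)]
  rw [← smul_finset_inter, smul_finset_eq_self_of_subset hfix g inter_subset_right]

variable [Fintype Ω]

theorem smul_finset_compl_eq (hfix : ∀ (g : G), ∀ b ∈ B, g • b = b) (g : G) : g • Bᶜ = Bᶜ := by
  rw [compl_eq_univ_sdiff, smul_finset_sdiff, smul_finset_univ,
    smul_finset_eq_self_of_subset hfix g (subset_refl B)]

theorem numOrbits_card_inter_eq (hfix : ∀ (g : G), ∀ b ∈ B, g • b = b) {k : ℕ} {J : Finset Ω}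
    (hJB : J ⊆ B) (hJk : #J ≤ k) :
    numOrbits G (fun S => #S = k ∧ S ∩ B = J) = numOrbits G (· ∈ Bᶜ.powersetCard (k - #J)) := by
  have hdisj {T : Finset Ω} (hT : T ⊆ Bᶜ) : Disjoint T J :=
    disjoint_of_subset_right hJB (subset_compl_iff_disjoint_right.1 hT)
  have hrecover (S : {S // #S = k ∧ S ∩ B = J}) : S.1 \ B ∪ J = S.1 :=
    (congrArg (S.1 \ B ∪ ·) S.2.2.symm).trans (sdiff_union_inter _ _)
  refine numOrbits_congr
    { toFun S := ⟨S.1 \ B, mem_powersetCard.2 ⟨?_, ?_⟩⟩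
      invFun T := ⟨T.1 ∪ J, ?_, ?_⟩
      left_inv S := ?_
      right_inv T := ?_ } fun S T => ?_
  · exact fun x hx => mem_compl.2 (mem_sdiff.1 hx).2
  · rw [card_sdiff, inter_comm, S.2.2, S.2.1]
  · obtain ⟨hT, hTcard⟩ := mem_powersetCard.1 T.2
    rw [card_union_of_disjoint (hdisj hT), hTcard]
    omega
  · obtain ⟨hT, -⟩ := mem_powersetCard.1 T.2
    rw [union_inter_distrib_right, inter_eq_left.2 hJB,
      disjoint_iff_inter_eq_empty.1 (subset_compl_iff_disjoint_right.1 hT), empty_union]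
  · exact Subtype.ext (hrecover S)
  · obtain ⟨hT, -⟩ := mem_powersetCard.1 T.2
    refine Subtype.ext ?_
    dsimp only
    rw [union_sdiff_distrib, sdiff_eq_empty_iff_subset.2 hJB, union_empty,
      sdiff_eq_self_of_disjoint (subset_compl_iff_disjoint_right.1 hT)]
  · simp only [Equiv.coe_fn_mk]
    constructor
    · rintro ⟨g, hg⟩
      exact ⟨g, by rw [smul_finset_sdiff, smul_finset_eq_self_of_subset hfix g (subset_refl B), hg]⟩
    · rintro ⟨g, hg⟩
      refine ⟨g, ?_⟩
      rw [← hrecover S, smul_finset_union, hg, smul_finset_eq_self_of_subset hfix g hJB, hrecover]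

theorem numOrbits_card_eq_sum_choose (hfix : ∀ (g : G), ∀ b ∈ B, g • b = b) {k : ℕ}
    (hk : #B ≤ k) :
    numOrbits G (fun S : Finset Ω => #S = k)
      = ∑ j ∈ range (#B + 1), (#B).choose j * numOrbits G (· ∈ Bᶜ.powersetCard (k - j)) := by
  rw [numOrbits_eq_sum_fiberwise (· ∩ B) (smul_finset_inter_eq hfix) (s := B.powerset)
    fun S _ => mem_powerset.2 inter_subset_right]
  simp_rw [← smul_eq_mul, ← sum_powerset_apply_card]
  exact sum_congr rfl fun J hJ => numOrbits_card_inter_eq hfix (mem_powerset.1 hJ)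
    ((card_le_card (mem_powerset.1 hJ)).trans hk)

end FixedSet

theorem apply_succ_sub_eq_of_sum_choose_mul_eq {a : ℕ → ℕ} {r k : ℕ} (hrk : r ≤ k)
    (hmono : ∀ m < k + 1, a m ≤ a (m + 1))
    (hsum : ∑ j ∈ range (r + 1), r.choose j * a (k + 1 - j)
      = ∑ j ∈ range (r + 1), r.choose j * a (k - j))
    {j : ℕ} (hj : j ≤ r) : a (k + 1 - j) = a (k - j) := by
  have hle : ∀ i ∈ range (r + 1), r.choose i * a (k - i) ≤ r.choose i * a (k + 1 - i) := by
    intro i hi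
    rw [show k + 1 - i = k - i + 1 by grind]
    exact Nat.mul_le_mul_left _ (hmono _ (by omega))
  have := (sum_eq_sum_iff_of_le hle).1 hsum.symm j (mem_range.2 (by omega))
  exact (Nat.eq_of_mul_eq_mul_left (Nat.choose_pos hj) this).symm

theorem apply_eq_apply_zero_of_sum_choose_mul_eq {a : ℕ → ℕ} {r d : ℕ} (hrd : r < d)
    (hmono : ∀ m < d, a m ≤ a (m + 1))
    (hsum : ∀ k, r ≤ k → k < d → ∑ j ∈ range (r + 1), r.choose j * a (k + 1 - j)
      = ∑ j ∈ range (r + 1), r.choose j * a (k - j)) :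
    a d = a 0 := by
  have hstep : ∀ m < d, a (m + 1) = a m := by
    intro m hm
    rcases le_or_gt r m with hrm | hmr
    · simpa using apply_succ_sub_eq_of_sum_choose_mul_eq hrm (fun i hi => hmono i (by omega))
        (hsum m hrm hm) (Nat.zero_le r)
    · have := apply_succ_sub_eq_of_sum_choose_mul_eq le_rfl (fun i hi => hmono i (by omega))
        (hsum r le_rfl hrd) (j := r - m) (by omega)
      rwa [show r + 1 - (r - m) = m + 1 by omega, show r - (r - m) = m by omega] at this
  suffices ∀ m ≤ d, a m = a 0 from this d le_rfl
  intro m hm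
  induction m with
  | zero => rfl
  | succ m ih => rw [hstep m (by omega), ih (by omega)]

theorem stmt5_general (n r d : ℕ)
    (H : Subgroup (Equiv.Perm (Fin n))) (B : Finset (Fin n))
    (hBcard : B.card = r)
    (hfix : ∀ h ∈ H, ∀ b ∈ B, h b = b)
    (hd1 : r < d) (hd2 : 2 * d ≤ n - r)
    (hO : ∀ k, r ≤ k → k ≤ d →
      numOrbits H (fun S : Finset (Fin n) => S.card = k)
        = numOrbits H (fun S : Finset (Fin n) => S.card = r)) :
    IsHomogeneousOn H Bᶜ d := by
  have hfix' : ∀ g : H, ∀ b ∈ B, g • b = b := fun g => hfix g g.2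
  have hcard : #Bᶜ = n - r := by rw [card_compl, hBcard, Fintype.card_fin]
  have htrans : numOrbits H (· ∈ Bᶜ.powersetCard d) = 1 := by
    rw [← numOrbits_powersetCard_zero (G := H) Bᶜ]
    refine apply_eq_apply_zero_of_sum_choose_mul_eq
      (a := fun m => numOrbits H (· ∈ Bᶜ.powersetCard m)) hd1
      (fun m hm => numOrbits_powersetCard_le_succ (smul_finset_compl_eq hfix') (by omega))
      fun k hk hkd => ?_
    rw [← hBcard, ← numOrbits_card_eq_sum_choose hfix' (by omega),
      ← numOrbits_card_eq_sum_choose hfix' (by omega), hO (k + 1) (by omega) hkd, hO k hk hkd.le]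
  intro S T hSA hTA hS hT
  obtain ⟨g, hg⟩ := (numOrbits_eq_one_iff.1 htrans).2 S T (mem_powersetCard.2 ⟨hSA, hS⟩)
    (mem_powersetCard.2 ⟨hTA, hT⟩)
  exact ⟨g, g.2, hg⟩

/-- Lemma 3.5(1): if `H ≤ S_n` (`n ≥ 7`) fixes pointwise a set `B` of cardinality `r ≥ 1`,
`A` is the complement of `B`, and `O_r(H) = ⋯ = O_d(H)` for some `r < d ≤ (n-r)/2`,
then `H` acts `d`-homogeneously on `A`. -/
theorem stmt5 (n r d : ℕ) (hn : 7 ≤ n)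
    (H : Subgroup (Equiv.Perm (Fin n))) (B : Finset (Fin n))
    (hBcard : B.card = r) (hr : 1 ≤ r)
    (hfix : ∀ h ∈ H, ∀ b ∈ B, h b = b)
    (hd1 : r < d) (hd2 : 2 * d ≤ n - r)
    (hO : ∀ k, r ≤ k → k ≤ d →
      numOrbits H (fun S : Finset (Fin n) => S.card = k)
        = numOrbits H (fun S : Finset (Fin n) => S.card = r)) :
    IsHomogeneousOn H Bᶜ d :=
  stmt5_general n r d H B hBcard hfix hd1 hd2 hO
end

section
/- Let n ≥ 8 and let H ≤ S_n be a subgroup whose set of fixed points on {1,…,n} is exactly {n}. Let d be an integer with 3 ≤ d ≤ (n−1)/2 such that O_2(H) = O_3(H) = ⋯ = O_d(H). Then H acts d-homogeneously on {1,…,n−1}. -/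
/-!
Write `a k` for the number of orbits of `H` on `k`-subsets of `Ω' = Ω \ {b}`. As `b` is fixed, a
`(k+1)`-set either contains `b` or not, so `O_{k+1} = a k + a (k+1)`, and `O_2 = ⋯ = O_d` gives
`a 1 = a 3` and `a k + a (k+1) = a 1 + a 2` for `1 ≤ k < d`.

If `H` were intransitive on `Ω'`, the orbit type of a 3-set (the multiset of the point orbits it
meets) would separate more orbits on 3-sets than there are point orbits, since no point of `Ω'`
is fixed and `|Ω'| ≥ 5`; so `a 3 > a 1`. Hence `a 1 = a 3 = 1`.

3-homogeneity on at least five points forces 2-homogeneity: colour the pairs in one orbit. Every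
triangle then carries the same number `m` of coloured pairs, and `m ∈ {1, 2}` is impossible, since
a colour class in which every vertex has degree at most one leaves a triangle in the other colour.
So `a 2 = 1` as well, and the recursion gives `a k = 1` for all `1 ≤ k ≤ d`.
-/

open Pointwise

def quotSubtypeEquivSum {α : Type*} (r : α → α → Prop) (P Q : α → Prop) [DecidablePred Q]
    (hQ : ∀ a b, r a b → (Q a ↔ Q b)) :
    Quot (fun x y : {a // P a} => r x y) ≃
      Quot (fun x y : {a // P a ∧ Q a} => r x y) ⊕ Quot (fun x y : {a // P a ∧ ¬Q a} => r x y) where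
  toFun := Quot.lift
    (fun x => if h : Q x then .inl (Quot.mk _ ⟨x, x.2, h⟩) else .inr (Quot.mk _ ⟨x, x.2, h⟩))
    (fun x y hxy => by
      by_cases hx : Q x
      · simp only [hx, (hQ _ _ hxy).mp hx, dite_true, Sum.inl.injEq]
        exact Quot.sound hxy
      · simp only [hx, mt (hQ _ _ hxy).mpr hx, dite_false, Sum.inr.injEq]
        exact Quot.sound hxy)
  invFun := Sum.elim (Quot.lift (fun x => Quot.mk _ ⟨x, x.2.1⟩) fun _ _ h => Quot.sound h)
    (Quot.lift (fun x => Quot.mk _ ⟨x, x.2.1⟩) fun _ _ h => Quot.sound h)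
  left_inv x := by
    induction x using Quot.ind with | mk x
    by_cases h : Q x <;> simp [h]
  right_inv x := by
    rcases x with x | x <;> induction x using Quot.ind with | mk x => simp [x.2.2]

theorem Multiset.eq_of_insert_self_insert_eq {β : Type*} {a a' u u' : β}
    (h : ({a, a, u} : Multiset β) = {a', a', u'}) : a = a' := by
  classical
  have := congrArg (count a) h
  simp only [insert_eq_cons, count_cons, count_singleton] at this
  split_ifs at this <;> simp_all

theorem Multiset.insert_self_insert_self_ne {β : Type*} {a c u : β} (hua : u ≠ a) :
    ({c, c, c} : Multiset β) ≠ {a, a, u} := fun h => by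
  have ha : a ∈ ({c, c, c} : Multiset β) := h ▸ by simp
  have hu : u ∈ ({c, c, c} : Multiset β) := h ▸ by simp
  simp only [insert_eq_cons, mem_cons, mem_singleton, or_self] at ha hu
  exact hua (hu.trans ha.symm)

theorem Multiset.insert_insert_ne_of_ne {β : Type*} {a u c₁ c₂ c₃ : β} (h₁₂ : c₁ ≠ c₂)
    (h₁₃ : c₁ ≠ c₃) (h₂₃ : c₂ ≠ c₃) : ({c₁, c₂, c₃} : Multiset β) ≠ {a, a, u} := fun h => by
  have h₁ : c₁ ∈ ({a, a, u} : Multiset β) := h ▸ by simp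
  have h₂ : c₂ ∈ ({a, a, u} : Multiset β) := h ▸ by simp
  have h₃ : c₃ ∈ ({a, a, u} : Multiset β) := h ▸ by simp
  simp only [insert_eq_cons, mem_cons, mem_singleton, or_self_left] at h₁ h₂ h₃
  grind

open Finset

section NumOrbits

variable {G Ω : Type*} [Group G] [DecidableEq Ω] [MulAction G Ω]

theorem exists_smul_eq_of_numOrbits_eq_one {P : Finset Ω → Prop} (h : numOrbits G P = 1)
    {S T : Finset Ω} (hS : P S) (hT : P T) : ∃ g : G, g • S = T := by
  have hequiv : Equivalence (fun S T : {S // P S} => ∃ g : G, g • S.val = T.val) :=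
    ⟨fun _ => ⟨1, one_smul _ _⟩, fun ⟨g, hg⟩ => ⟨g⁻¹, by rw [← hg, inv_smul_smul]⟩,
      fun ⟨g, hg⟩ ⟨k, hk⟩ => ⟨k * g, by rw [mul_smul, hg, hk]⟩⟩
  have := (Nat.card_eq_one_iff_unique.mp h).1
  exact hequiv.eqvGen_iff.mp
    (Quot.eq.mp (Subsingleton.elim (Quot.mk _ ⟨S, hS⟩) (Quot.mk _ ⟨T, hT⟩)))

theorem numOrbits_eq_one_of_exists_smul_eq {P : Finset Ω → Prop} (hP : ∃ S, P S)
    (h : ∀ S T, P S → P T → ∃ g : G, g • S = T) : numOrbits G P = 1 := by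
  obtain ⟨S₀, hS₀⟩ := hP
  refine Nat.card_eq_one_iff_unique.mpr ⟨⟨fun x y => ?_⟩, ⟨Quot.mk _ ⟨S₀, hS₀⟩⟩⟩
  induction x using Quot.ind
  induction y using Quot.ind
  exact Quot.sound (h _ _ (Subtype.prop _) (Subtype.prop _))

theorem numOrbits_eq_add_of_fixed [Fintype Ω] {b : Ω} (hb : ∀ g : G, g • b = b)
    (P : Finset Ω → Prop) :
    numOrbits G P = numOrbits G (fun S => P S ∧ b ∈ S) + numOrbits G (fun S => P S ∧ b ∉ S) := by
  rw [numOrbits, numOrbits, numOrbits, ← Nat.card_sum]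
  refine Nat.card_congr
    (quotSubtypeEquivSum (fun S T : Finset Ω => ∃ g : G, g • S = T) P (b ∈ ·) ?_)
  rintro S _ ⟨g, rfl⟩
  rw [← smul_mem_smul_finset_iff g, hb]

theorem numOrbits_card_succ_and_mem {b : Ω} (hb : ∀ g : G, g • b = b) (k : ℕ) :
    numOrbits G (fun S => #S = k + 1 ∧ b ∈ S) = numOrbits G (fun S => #S = k ∧ b ∉ S) := by
  refine Nat.card_congr (Quot.congr
    { toFun := fun S => ⟨S.1.erase b, by simp [card_erase_of_mem S.2.2, S.2.1]⟩
      invFun := fun T => ⟨insert b T.1, by simp [card_insert_of_notMem T.2.2, T.2.1]⟩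
      left_inv := fun S => Subtype.ext (insert_erase S.2.2)
      right_inv := fun T => Subtype.ext (erase_insert T.2.2) } fun S T => ?_)
  have smul_erase (g : G) (U : Finset Ω) : g • U.erase b = (g • U).erase b := by
    rw [erase_eq, erase_eq, smul_finset_sdiff, smul_finset_singleton, hb]
  simp only [Equiv.coe_fn_mk]
  refine exists_congr fun g => ⟨fun h => by rw [smul_erase, h], fun h => ?_⟩
  rw [← insert_erase S.2.2, ← insert_erase T.2.2, smul_finset_insert, hb, h]

theorem numOrbits_card_succ [Fintype Ω] {b : Ω} (hb : ∀ g : G, g • b = b) (k : ℕ) :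
    numOrbits G (fun S : Finset Ω => #S = k + 1) =
      numOrbits G (fun S => #S = k ∧ S ⊆ {b}ᶜ) + numOrbits G (fun S => #S = k + 1 ∧ S ⊆ {b}ᶜ) := by
  simp only [subset_compl_singleton]
  rw [numOrbits_eq_add_of_fixed hb, numOrbits_card_succ_and_mem hb]

theorem numOrbits_card_one_le [Finite Ω] :
    numOrbits G (fun S : Finset Ω => #S = 1) ≤ Nat.card (MulAction.orbitRel.Quotient G Ω) := by
  refine Nat.card_le_card_of_surjective (Quotient.lift (s := MulAction.orbitRel G Ω)
    (fun x => Quot.mk _ ⟨{x}, card_singleton x⟩) fun x y hxy => ?_) fun S => ?_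
  · obtain ⟨g, rfl⟩ := MulAction.mem_orbit_iff.mp (MulAction.orbitRel_apply.mp hxy)
    exact (Quot.sound ⟨g, smul_finset_singleton (a := g) y⟩).symm
  · induction S using Quot.ind with | mk S
    obtain ⟨x, hx⟩ := card_eq_one.mp S.2
    exact ⟨Quotient.mk _ x, congrArg (Quot.mk _) (Subtype.ext hx.symm)⟩

theorem card_le_numOrbits_of_invariant [Finite Ω] {β γ : Type*} {P : Finset Ω → Prop}
    (τ : Finset Ω → γ) (hτ : ∀ (g : G) S, τ (g • S) = τ S) (Φ : β → γ) (hΦ : Function.Injective Φ)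
    (hreal : ∀ c, ∃ S, P S ∧ τ S = Φ c) : Nat.card β ≤ numOrbits G P := by
  choose S hS using hreal
  let τ' : Quot (fun S T : {S // P S} => ∃ g : G, g • S.val = T.val) → γ :=
    Quot.lift (τ ·.1) fun _ _ ⟨g, hg⟩ => hg ▸ (hτ g _).symm
  refine Nat.card_le_card_of_injective (fun c => Quot.mk _ ⟨S c, (hS c).1⟩) fun c c' h => hΦ ?_
  rw [← (hS c).2, ← (hS c').2]
  exact congrArg τ' h

end NumOrbits

section IsHomogeneousOn

variable {Ω : Type*} [DecidableEq Ω] {H : Subgroup (Equiv.Perm Ω)} {A : Finset Ω} {k : ℕ}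

theorem IsHomogeneousOn.of_numOrbits_eq_one (h : numOrbits H (fun S => #S = k ∧ S ⊆ A) = 1) :
    IsHomogeneousOn H A k := fun S T hS hT hSk hTk => by
  obtain ⟨h, hST⟩ := exists_smul_eq_of_numOrbits_eq_one h ⟨hSk, hS⟩ ⟨hTk, hT⟩
  exact ⟨h, h.2, hST⟩

theorem IsHomogeneousOn.numOrbits_eq_one (h : IsHomogeneousOn H A k) (hk : k ≤ #A) :
    numOrbits H (fun S => #S = k ∧ S ⊆ A) = 1 := by
  obtain ⟨S, hSA, hS⟩ := exists_subset_card_eq hk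
  refine numOrbits_eq_one_of_exists_smul_eq ⟨S, hS, hSA⟩ fun S T hS hT => ?_
  obtain ⟨h, hH, hST⟩ := h S T hS.2 hT.2 hS.1 hT.1
  exact ⟨⟨h, hH⟩, hST⟩

end IsHomogeneousOn

theorem eq_pair_of_subset_triple {α : Type*} [DecidableEq α] {x y z : α} {e : Finset α}
    (he : e ⊆ {x, y, z}) (hc : #e = 2) : e = {x, y} ∨ e = {x, z} ∨ e = {y, z} := by
  obtain ⟨s, t, hst, rfl⟩ := card_eq_two.mp hc
  have hs : s ∈ ({x, y, z} : Finset α) := he (by simp)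
  have ht : t ∈ ({x, y, z} : Finset α) := he (by simp)
  simp only [mem_insert, mem_singleton] at hs ht
  rcases hs with rfl | rfl | rfl <;> rcases ht with rfl | rfl | rfl <;> simp_all [pair_comm]

section PairCount

variable {α : Type*} (red : Finset α → Prop) [DecidablePred red]

def pairCount (T : Finset α) : ℕ := #{e ∈ T.powersetCard 2 | red e}

theorem pairCount_add_pairCount_not {T : Finset α} (hT : #T = 3) :
    pairCount red T + pairCount (¬red ·) T = 3 := by
  rw [pairCount, pairCount, card_filter_add_card_filter_not, card_powersetCard, hT]
  rfl

theorem one_lt_pairCount {T e e' : Finset α} (hne : e ≠ e') (he : e ⊆ T) (he' : e' ⊆ T)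
    (hc : #e = 2) (hc' : #e' = 2) (hred : red e) (hred' : red e') : 1 < pairCount red T :=
  one_lt_card.mpr ⟨e, by simp [he, hc, hred], e', by simp [he', hc', hred'], hne⟩

variable [DecidableEq α]

theorem pairCount_smul {G : Type*} [Group G] [MulAction G α] (g : G)
    (hred : ∀ e, red (g • e) ↔ red e) (T : Finset α) : pairCount red (g • T) = pairCount red T := by
  refine card_nbij' (g⁻¹ • ·) (g • ·) (fun e he => ?_) (fun e he => ?_)
    (fun e _ => smul_inv_smul g e) (fun e _ => inv_smul_smul g e)
  · simp only [coe_filter, mem_powersetCard, Set.mem_ofPred_eq] at he ⊢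
    exact ⟨⟨subset_smul_finset_iff.mp he.1.1, by rw [card_smul_finset, he.1.2]⟩,
      by rw [← hred, smul_inv_smul]; exact he.2⟩
  · simp only [coe_filter, mem_powersetCard, Set.mem_ofPred_eq] at he ⊢
    exact ⟨⟨smul_finset_subset_smul_finset he.1.1, by rw [card_smul_finset, he.1.2]⟩,
      (hred e).mpr he.2⟩

theorem pairCount_triple_eq_zero {x y z : α} (hxy : ¬red {x, y}) (hxz : ¬red {x, z})
    (hyz : ¬red {y, z}) : pairCount red {x, y, z} = 0 := by
  refine card_eq_zero.mpr (filter_eq_empty_iff.mpr fun e he => ?_)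
  rw [mem_powersetCard] at he
  rcases eq_pair_of_subset_triple he.1 he.2 with rfl | rfl | rfl <;> assumption

theorem exists_pairCount_eq_zero {V : Finset α} (hV : 5 ≤ #V)
    (h : ∀ T ⊆ V, #T = 3 → pairCount red T ≤ 1) : ∃ T ⊆ V, #T = 3 ∧ pairCount red T = 0 := by
  -- The red pairs form a matching: `N x`, the red neighbours of `x`, has at most one element.
  set N : α → Finset α := fun x => {y ∈ V | y ≠ x ∧ red {x, y}}
  have hN : ∀ x ∈ V, #(N x) ≤ 1 := by
    refine fun x hx => card_le_one.mpr fun y hy z hz => ?_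
    simp only [N, mem_filter] at hy hz
    by_contra hyz
    have hxyz : {x, y, z} ⊆ V := by simp [insert_subset_iff, hx, hy.1, hz.1]
    have := h _ hxyz (card_eq_three.mpr ⟨x, y, z, hy.2.1.symm, hz.2.1.symm, hyz, rfl⟩)
    refine (one_lt_pairCount red ?_ (by simp [insert_subset_iff]) (by simp [insert_subset_iff])
      (card_pair hy.2.1.symm) (card_pair hz.2.1.symm) hy.2.2 hz.2.2).not_ge this
    intro hpair
    have : y ∈ ({x, z} : Finset α) := hpair ▸ by simp
    simp_all
  obtain ⟨x, hx⟩ := card_pos.mp (by omega : 0 < #V)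
  obtain ⟨z, hzV, hz⟩ := exists_mem_notMem_of_card_lt_card (s := insert x (N x)) (t := V)
    (by have := card_insert_le x (N x); have := hN x hx; omega)
  obtain ⟨w, hwV, hw⟩ := exists_mem_notMem_of_card_lt_card
    (s := insert x (insert z (N x ∪ N z))) (t := V) (by
      have := card_insert_le x (insert z (N x ∪ N z))
      have := card_insert_le z (N x ∪ N z)
      have := card_union_le (N x) (N z)
      have := hN x hx
      have := hN z hzV
      omega)
  simp only [N, mem_insert, mem_union, mem_filter, not_or, not_and] at hz hw
  refine ⟨{x, z, w}, by simp [insert_subset_iff, hx, hzV, hwV],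
    card_eq_three.mpr ⟨x, z, w, Ne.symm hz.1, Ne.symm hw.1, Ne.symm hw.2.1, rfl⟩,
    pairCount_triple_eq_zero red (hz.2 hzV hz.1) (hw.2.2.1 hwV hw.1) (hw.2.2.2 hwV hw.2.1)⟩

theorem red_of_pairCount_eq {V : Finset α} (hV : 5 ≤ #V)
    (hconst : ∀ S ⊆ V, ∀ T ⊆ V, #S = 3 → #T = 3 → pairCount red S = pairCount red T)
    {e e' : Finset α} (he : e ⊆ V) (he' : e' ⊆ V) (hc : #e = 2) (hc' : #e' = 2) (hred : red e) :
    red e' := by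
  have triangle : ∀ f ⊆ V, #f = 2 → ∃ T, f ⊆ T ∧ T ⊆ V ∧ #T = 3 := fun f hf hfc =>
    exists_subsuperset_card_eq hf (by omega) (by omega)
  obtain ⟨T, heT, hTV, hT⟩ := triangle e he hc
  have hpos : 0 < pairCount red T := card_pos.mpr ⟨e, by simp [heT, hc, hred]⟩
  have hsum := pairCount_add_pairCount_not red hT
  have hcompl : ∀ S ⊆ V, #S = 3 → pairCount (¬red ·) S = pairCount (¬red ·) T := by
    intro S hS hS3
    have := pairCount_add_pairCount_not red hS3
    have := hconst S hS T hTV hS3 hT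
    omega
  -- The common count is `0` or `3`: apply `exists_pairCount_eq_zero` to `red` or to `¬red`.
  by_cases hsmall : pairCount red T ≤ 1
  · obtain ⟨T₀, hT₀V, hT₀, h₀⟩ := exists_pairCount_eq_zero red hV
      fun S hS hS3 => (hconst S hS T hTV hS3 hT).trans_le hsmall
    have := hconst T₀ hT₀V T hTV hT₀ hT
    omega
  · obtain ⟨T₀, hT₀V, hT₀, h₀⟩ := exists_pairCount_eq_zero (¬red ·) hV
      fun S hS hS3 => by have := hcompl S hS hS3; omega
    obtain ⟨T', he'T', hT'V, hT'⟩ := triangle e' he' hc'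
    have h₁ := hcompl T' hT'V hT'
    have h₂ := hcompl T₀ hT₀V hT₀
    by_contra hnot
    have : 0 < pairCount (¬red ·) T' := card_pos.mpr ⟨e', by simp [he'T', hc', hnot]⟩
    omega

end PairCount

theorem IsHomogeneousOn.two_of_three {Ω : Type*} [DecidableEq Ω] {H : Subgroup (Equiv.Perm Ω)}
    {A : Finset Ω} (hA : 5 ≤ #A) (h3 : IsHomogeneousOn H A 3) : IsHomogeneousOn H A 2 := by
  classical
  intro P Q hP hQ hP2 hQ2
  set red : Finset Ω → Prop := fun e => ∃ h ∈ H, h • P = e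
  have hconst : ∀ S ⊆ A, ∀ T ⊆ A, #S = 3 → #T = 3 → pairCount red S = pairCount red T := by
    intro S hS T hT hS3 hT3
    obtain ⟨h, hH, rfl⟩ := h3 S T hS hT hS3 hT3
    refine (pairCount_smul red h (fun e => ⟨fun ⟨k, hk, hke⟩ => ⟨h⁻¹ * k, ?_, ?_⟩,
      fun ⟨k, hk, hke⟩ => ⟨h * k, H.mul_mem hH hk, by rw [mul_smul, hke]⟩⟩) S).symm
    · exact H.mul_mem (H.inv_mem hH) hk
    · rw [mul_smul, hke, inv_smul_smul]
  exact red_of_pairCount_eq red hA hconst hP hQ hP2 hQ2 ⟨1, H.one_mem, one_smul _ _⟩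

theorem exists_ne_of_card_fiber_le_two {Ω β : Type*} [Fintype Ω] [DecidableEq β] (f : Ω → β)
    (hf : ∀ c, #(univ.filter (f · = c)) ≤ 2) (hΩ : 6 ≤ Fintype.card Ω) (b p q : Ω) :
    ∃ r, r ≠ b ∧ f r ≠ f p ∧ f r ≠ f q := by
  classical
  obtain ⟨r, -, hr⟩ := exists_mem_notMem_of_card_lt_card
    (s := insert b (univ.filter (f · = f p) ∪ univ.filter (f · = f q))) (t := univ) (by
      have := card_insert_le b (univ.filter (f · = f p) ∪ univ.filter (f · = f q))
      have := card_union_le (univ.filter (f · = f p)) (univ.filter (f · = f q))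
      have := hf (f p)
      have := hf (f q)
      rw [card_univ]
      omega)
  simp only [mem_insert, mem_union, mem_filter, mem_univ, true_and, not_or] at hr
  exact ⟨r, hr⟩

section OrbitType

open MulAction

variable (G : Type*) {Ω : Type*} [Group G] [MulAction G Ω]

def orbitType (S : Finset Ω) : Multiset (orbitRel.Quotient G Ω) :=
  S.val.map (Quotient.mk _)

variable {G}

theorem quotient_mk_orbitRel_eq_iff {x y : Ω} :
    Quotient.mk (orbitRel G Ω) x = Quotient.mk _ y ↔ ∃ g : G, g • y = x := by
  rw [Quotient.eq, orbitRel_apply, mem_orbit_iff]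

variable [DecidableEq Ω]

theorem orbitType_smul (g : G) (S : Finset Ω) : orbitType G (g • S) = orbitType G S := by
  rw [orbitType, orbitType, smul_finset_def, image_val,
    Multiset.dedup_eq_self.mpr (S.nodup.map (MulAction.injective g)), Multiset.map_map]
  exact Multiset.map_congr rfl fun x _ => orbitRel.Quotient.quotient_smul_eq

theorem orbitType_triple {x y z : Ω} (hxy : x ≠ y) (hxz : x ≠ z) (hyz : y ≠ z) :
    orbitType G {x, y, z} = {Quotient.mk _ x, Quotient.mk _ y, Quotient.mk _ z} := by
  rw [orbitType, insert_val_of_notMem (by simp [hxy, hxz]), insert_val_of_notMem (by simp [hyz])]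
  simp

variable [Fintype Ω] {b : Ω}

theorem exists_orbitType_ne_insert_self_insert (hb : ∀ g : G, g • b = b)
    (hΩ : 6 ≤ Fintype.card Ω) {p q : Ω} (hp : p ≠ b) (hq : q ≠ b) (hpq : ∀ g : G, g • p ≠ q) :
    ∃ S, (#S = 3 ∧ b ∉ S) ∧ ∀ a u, u ≠ a → orbitType G S ≠ {a, a, u} := by
  classical
  set mk := Quotient.mk (orbitRel G Ω)
  have hmkb : ∀ x, mk x = mk b → x = b := fun x h => by
    obtain ⟨g, rfl⟩ := quotient_mk_orbitRel_eq_iff.mp h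
    exact hb g
  by_cases h3 : ∃ x y z, x ≠ y ∧ x ≠ z ∧ y ≠ z ∧ mk y = mk x ∧ mk z = mk x
  · obtain ⟨x, y, z, hxy, hxz, hyz, hy, hz⟩ := h3
    have hxb : x ≠ b := fun h => hxy (h.trans (hmkb y (hy.trans (congrArg mk h))).symm)
    have hyb : y ≠ b := fun h => hxb (hmkb x (hy.symm.trans (congrArg mk h)))
    have hzb : z ≠ b := fun h => hxb (hmkb x (hz.symm.trans (congrArg mk h)))
    refine ⟨{x, y, z}, ⟨card_eq_three.mpr ⟨x, y, z, hxy, hxz, hyz, rfl⟩, ?_⟩, fun a u hua => ?_⟩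
    · simp [hxb.symm, hyb.symm, hzb.symm]
    rw [orbitType_triple hxy hxz hyz]
    change {mk x, mk y, mk z} ≠ _
    rw [hy, hz]
    exact Multiset.insert_self_insert_self_ne hua
  push Not at h3
  obtain ⟨r, hrb, hrp, hrq⟩ := exists_ne_of_card_fiber_le_two mk (fun c => by
    by_contra! h
    obtain ⟨x, hx, y, hy, z, hz, hxy, hxz, hyz⟩ := two_lt_card.mp h
    simp only [mem_filter, mem_univ, true_and] at hx hy hz
    exact h3 x y z hxy hxz hyz (hy.trans hx.symm) (hz.trans hx.symm)) hΩ b p q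
  have hpq' : mk p ≠ mk q := fun h => (quotient_mk_orbitRel_eq_iff.mp h.symm).elim hpq
  have hpr : mk p ≠ mk r := Ne.symm hrp
  have hqr : mk q ≠ mk r := Ne.symm hrq
  have hpq'' : p ≠ q := fun h => hpq' (congrArg mk h)
  have hpr' : p ≠ r := fun h => hpr (congrArg mk h)
  have hqr' : q ≠ r := fun h => hqr (congrArg mk h)
  refine ⟨{p, q, r}, ⟨card_eq_three.mpr ⟨p, q, r, hpq'', hpr', hqr', rfl⟩, ?_⟩, fun a u _ => ?_⟩
  · simp [hp.symm, hq.symm, hrb.symm]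
  rw [orbitType_triple hpq'' hpr' hqr']
  exact Multiset.insert_insert_ne_of_ne hpq' hpr hqr

theorem card_orbitRel_quotient_le_numOrbits (hfix : ∀ x, (∀ g : G, g • x = x) ↔ x = b)
    (hΩ : 6 ≤ Fintype.card Ω) {p q : Ω} (hp : p ≠ b) (hq : q ≠ b) (hpq : ∀ g : G, g • p ≠ q) :
    Nat.card (orbitRel.Quotient G Ω) ≤ numOrbits G (fun S => #S = 3 ∧ S ⊆ {b}ᶜ) := by
  classical
  simp only [subset_compl_singleton]
  set mk := Quotient.mk (orbitRel G Ω)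
  have hb : ∀ g : G, g • b = b := (hfix b).mpr rfl
  obtain ⟨E, hE, hE_ne⟩ := exists_orbitType_ne_insert_self_insert hb hΩ hp hq hpq
  have hpq' : mk p ≠ mk q := fun h => (quotient_mk_orbitRel_eq_iff.mp h.symm).elim hpq
  let partner : orbitRel.Quotient G Ω → Ω := fun c => if c = mk q then p else q
  have hpartner : ∀ c, partner c ≠ b ∧ mk (partner c) ≠ c := fun c => by
    by_cases hc : c = mk q
    · simp [partner, hc, hp, hpq']
    · simpa [partner, hc, hq] using Ne.symm hc
  -- Distinct orbit types, each realised by a 3-set avoiding `b`: the orbit `c ≠ mk b` goes to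
  -- `{c, c, c'}` with `c' ≠ c`, and `mk b` to a type not of this shape.
  let Φ : orbitRel.Quotient G Ω → Multiset (orbitRel.Quotient G Ω) :=
    fun c => if c = mk b then orbitType G E else {c, c, mk (partner c)}
  refine card_le_numOrbits_of_invariant (orbitType G) orbitType_smul Φ (fun c c' h => ?_)
    fun c => ?_
  · by_cases hc : c = mk b <;> by_cases hc' : c' = mk b <;>
      simp only [Φ, hc, hc', if_true, if_false] at h
    · rw [hc, hc']
    · exact (hE_ne _ _ (hpartner c').2 h).elim
    · exact (hE_ne _ _ (hpartner c).2 h.symm).elim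
    · exact Multiset.eq_of_insert_self_insert_eq h
  by_cases hc : c = mk b
  · exact ⟨E, hE, by simp [Φ, hc]⟩
  induction c using Quotient.inductionOn with | h x
  have hx : x ≠ b := fun h => hc (congrArg mk h)
  obtain ⟨g, hg⟩ : ∃ g : G, g • x ≠ x := by simpa using mt (hfix x).mp hx
  have hgx : g • x ≠ b := fun h => hx (MulAction.injective g (h.trans (hb g).symm))
  obtain ⟨hyb, hy⟩ := hpartner (mk x)
  have hmk_gx : mk (g • x) = mk x := orbitRel.Quotient.quotient_smul_eq
  have hxy : x ≠ partner (mk x) := fun h => hy (congrArg mk h).symm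
  have hgxy : g • x ≠ partner (mk x) := fun h => hy (hmk_gx ▸ (congrArg mk h).symm)
  refine ⟨{x, g • x, partner (mk x)},
    ⟨card_eq_three.mpr ⟨_, _, _, hg.symm, hxy, hgxy, rfl⟩, by simp [hx.symm, hgx.symm, hyb.symm]⟩,
    ?_⟩
  rw [orbitType_triple hg.symm hxy hgxy]
  change {mk x, mk (g • x), _} = _
  simp only [Φ, hc, if_false, hmk_gx]
  rfl

end OrbitType

theorem smul_eq_self_iff_of_fixedPoints {Ω : Type*} {H : Subgroup (Equiv.Perm Ω)} {b : Ω}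
    (hfix : {x | ∀ h ∈ H, h x = x} = {b}) (x : Ω) : (∀ h : H, h • x = x) ↔ x = b := by
  rw [← Set.mem_singleton_iff, ← hfix]
  simp [Subgroup.smul_def]

theorem isHomogeneousOn_one_of_numOrbits_three_le {Ω : Type*} [DecidableEq Ω] [Fintype Ω]
    {H : Subgroup (Equiv.Perm Ω)} {b : Ω} (hfix : {x | ∀ h ∈ H, h x = x} = {b})
    (hΩ : 6 ≤ Fintype.card Ω)
    (h31 : numOrbits H (fun S => #S = 3 ∧ S ⊆ {b}ᶜ) ≤ numOrbits H (fun S => #S = 1 ∧ S ⊆ {b}ᶜ)) :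
    IsHomogeneousOn H {b}ᶜ 1 := by
  have hfix' := smul_eq_self_iff_of_fixedPoints hfix
  intro S T hS hT hS1 hT1
  obtain ⟨p, rfl⟩ := card_eq_one.mp hS1
  obtain ⟨q, rfl⟩ := card_eq_one.mp hT1
  by_contra hpq
  have hpoints := card_orbitRel_quotient_le_numOrbits hfix' hΩ (Ne.symm (by simpa using hS))
    (Ne.symm (by simpa using hT))
    fun h hh => hpq ⟨h, h.2, by rw [smul_finset_singleton, ← Subgroup.smul_def, hh]⟩
  have hsingletons := numOrbits_card_one_le (G := H) (Ω := Ω)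
  rw [numOrbits_card_succ ((hfix' b).mpr rfl) 0, zero_add] at hsingletons
  have hempty : numOrbits H (fun S => #S = 0 ∧ S ⊆ {b}ᶜ) = 1 :=
    IsHomogeneousOn.numOrbits_eq_one (fun S T _ _ hS hT => ⟨1, H.one_mem, by simp_all⟩)
      (Nat.zero_le _)
  omega

theorem stmt9_general (n d : ℕ) (hn : 8 ≤ n)
    (H : Subgroup (Equiv.Perm (Fin n))) (b : Fin n)
    (hfix : {x : Fin n | ∀ h ∈ H, h x = x} = {b})
    (hd1 : 3 ≤ d)
    (hO : ∀ k, 2 ≤ k → k ≤ d →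
      numOrbits H (fun S : Finset (Fin n) => S.card = k)
        = numOrbits H (fun S : Finset (Fin n) => S.card = 2)) :
    IsHomogeneousOn H ({b} : Finset (Fin n))ᶜ d := by
  set a : ℕ → ℕ := fun k => numOrbits H (fun S : Finset (Fin n) => #S = k ∧ S ⊆ {b}ᶜ)
  have hrec : ∀ k, numOrbits H (fun S : Finset (Fin n) => #S = k + 1) = a k + a (k + 1) :=
    numOrbits_card_succ ((smul_eq_self_iff_of_fixedPoints hfix b).mpr rfl)
  have hO' : ∀ k, 1 ≤ k → k + 1 ≤ d → a k + a (k + 1) = a 1 + a 2 := fun k hk hkd => by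
    rw [← hrec, ← hrec]
    exact hO (k + 1) (by omega) hkd
  have hcard : #({b}ᶜ : Finset (Fin n)) = n - 1 := by simp [card_compl]
  have h13 : a 2 + a 3 = a 1 + a 2 := hO' 2 (by omega) (by omega)
  have ha1 : a 1 = 1 := (isHomogeneousOn_one_of_numOrbits_three_le hfix
    (by rw [Fintype.card_fin]; omega) (show a 3 ≤ a 1 by omega)).numOrbits_eq_one (by omega)
  have ha2 : a 2 = 1 := ((IsHomogeneousOn.of_numOrbits_eq_one (show a 3 = 1 by omega)).two_of_three
    (by omega)).numOrbits_eq_one (by omega)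
  have hak : ∀ k, 1 ≤ k → k ≤ d → a k = 1 := by
    intro k hk
    induction k, hk using Nat.le_induction with
    | base => exact fun _ => ha1
    | succ k hk ih => exact fun hkd => by have := hO' k hk hkd; have := ih (by omega); omega
  exact .of_numOrbits_eq_one (hak d (by omega) le_rfl)

/-- If `H ≤ S_n` (`n ≥ 8`) has the last point `b` as its unique fixed point and
`O_2(H) = ⋯ = O_d(H)` for some `3 ≤ d ≤ (n-1)/2`, then `H` acts `d`-homogeneously
on the remaining `n - 1` points. -/
theorem stmt9 (n d : ℕ) (hn : 8 ≤ n)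
    (H : Subgroup (Equiv.Perm (Fin n))) (b : Fin n) (hb : (b : ℕ) = n - 1)
    (hfix : {x : Fin n | ∀ h ∈ H, h x = x} = {b})
    (hd1 : 3 ≤ d) (hd2 : 2 * d ≤ n - 1)
    (hO : ∀ k, 2 ≤ k → k ≤ d →
      numOrbits H (fun S : Finset (Fin n) => S.card = k)
        = numOrbits H (fun S : Finset (Fin n) => S.card = 2)) :
    IsHomogeneousOn H ({b} : Finset (Fin n))ᶜ d :=
  stmt9_general n d hn H b hfix hd1 hO
end

section
/- Let n ≥ 8 and let H ≤ S_n be a subgroup that stabilizes the set {n−1, n} setwise (i.e., h·{n−1,n} = {n−1,n} for all h ∈ H). Let d be an integer with 3 ≤ d ≤ (n−2)/2 such that O_2(H) = O_3(H) = ⋯ = O_d(H). Then H acts d-homogeneously on {1,…,n−2}. -/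
open Pointwise

/-!
Let `A` be the complement of the two-point set `{a, b}` that `G` preserves. A `k`-set meets
`{a, b}` in `0`, `1` or `2` points, so `O_k = α_k + τ_(k-1) + α_(k-2)`, where `α_m` counts the
orbits on `m`-subsets of `A` and `τ_m` the orbits on sets made of an `m`-subset of `A` and one of
`a, b`. By the Livingstone–Wagner inequality relative to `A` each of these sequences is
nondecreasing while `2m < |A|`, so `O_2 = ⋯ = O_d` forces all of them to be constant in that
range. In particular `α_1 = α_0 = 1`, i.e. `G` is transitive on `A`, and `τ_1 = τ_2`.

If `G` fixes `a` then `τ_m = 2 α_m`, whence `α_2 = α_1 = 1`. Otherwise `τ_m` is the number of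
orbits of the stabilizer `K` of `a` on `m`-subsets of `A`. As `K` has index two, it is either
transitive on `A` or has two orbits of equal size swapped by `G`; in the latter case it has two
orbits on points but at least three on pairs, contradicting `τ_1 = τ_2`. So
`α_2 ≤ τ_2 = τ_1 = 1`, and finally `α_d = α_2 = 1`.
-/

open Finset

section OrbitCounting

variable {Ω : Type*} [DecidableEq Ω] {G G' : Type*} [Group G] [Group G'] [MulAction G Ω]
  [MulAction G' Ω]

lemma smul_finset_inter_of_smul_eq {g : G} {A : Finset Ω} (hA : g • A = A) (S : Finset Ω) :
    g • S ∩ A = g • (S ∩ A) := by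
  rw [smul_finset_inter, hA]

lemma smul_finset_sdiff_of_smul_eq {g : G} {A : Finset Ω} (hA : g • A = A) (S : Finset Ω) :
    g • S \ A = g • (S \ A) := by
  rw [smul_finset_sdiff, hA]

lemma smul_mem_iff_of_smul_eq {g : G} {A : Finset Ω} (hA : g • A = A) {x : Ω} :
    g • x ∈ A ↔ x ∈ A := by
  simpa only [hA] using smul_mem_smul_finset_iff (s := A) (b := x) g

variable (G) in
def FinsetOrbitRel (P : Finset Ω → Prop) (S T : {S : Finset Ω // P S}) : Prop :=
  ∃ g : G, g • S.1 = T.1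

lemma numOrbits_eq_card_quot (P : Finset Ω → Prop) :
    numOrbits G P = Nat.card (Quot (FinsetOrbitRel G P)) := rfl

lemma finsetOrbitRel_equivalence (P : Finset Ω → Prop) :
    Equivalence (FinsetOrbitRel G P) where
  refl _ := ⟨1, one_smul _ _⟩
  symm := fun ⟨g, hg⟩ => ⟨g⁻¹, by rw [← hg, inv_smul_smul]⟩
  trans := fun ⟨g, hg⟩ ⟨g', hg'⟩ => ⟨g' * g, by rw [mul_smul, hg, hg']⟩

lemma quot_mk_finsetOrbitRel_eq_iff {P : Finset Ω → Prop} {S T : {S : Finset Ω // P S}} :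
    Quot.mk (FinsetOrbitRel G P) S = Quot.mk _ T ↔ ∃ g : G, g • S.1 = T.1 :=
  Quot.eq.trans (finsetOrbitRel_equivalence P).eqvGen_iff

lemma numOrbits_eq_of_map {P Q : Finset Ω → Prop} (f : Finset Ω → Finset Ω)
    (hf : ∀ S, P S → Q (f S))
    (hrel : ∀ S T, P S → P T → ((∃ g : G, g • S = T) ↔ ∃ g' : G', g' • f S = f T))
    (hsurj : ∀ T, Q T → ∃ S, P S ∧ ∃ g' : G', g' • f S = T) :
    numOrbits G P = numOrbits G' Q := by
  refine Nat.card_eq_of_bijective (Quot.map (fun S => ⟨f S, hf S S.2⟩)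
    fun S T h => (hrel S T S.2 T.2).mp h) ⟨?_, ?_⟩
  · rintro ⟨S⟩ ⟨T⟩ h
    exact quot_mk_finsetOrbitRel_eq_iff.mpr
      ((hrel S T S.2 T.2).mpr (quot_mk_finsetOrbitRel_eq_iff.mp h))
  · rintro ⟨T⟩
    obtain ⟨S, hS, hST⟩ := hsurj T T.2
    exact ⟨Quot.mk _ ⟨S, hS⟩, Quot.sound hST⟩

lemma numOrbits_eq_of_equivariant {P Q : Finset Ω → Prop} (f e : Finset Ω → Finset Ω)
    (hf : ∀ (g : G) S, f (g • S) = g • f S) (he : ∀ (g : G) T, e (g • T) = g • e T)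
    (hPQ : ∀ S, P S → Q (f S)) (hQP : ∀ T, Q T → P (e T))
    (hef : ∀ S, P S → e (f S) = S) (hfe : ∀ T, Q T → f (e T) = T) :
    numOrbits G P = numOrbits G Q := by
  refine numOrbits_eq_of_map f hPQ (fun S T hS hT => ⟨?_, ?_⟩)
    fun T hT => ⟨e T, hQP T hT, 1, by rw [one_smul, hfe T hT]⟩
  · rintro ⟨g, rfl⟩
    exact ⟨g, (hf g S).symm⟩
  · rintro ⟨g, hg⟩
    exact ⟨g, by rw [← hef S hS, ← he, hg, hef T hT]⟩

lemma numOrbits_le_numOrbits_subgroup (K : Subgroup G) (P : Finset Ω → Prop) [Finite Ω] :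
    numOrbits G P ≤ numOrbits K P := by
  refine Nat.card_le_card_of_surjective
    (Quot.map id fun S T ⟨k, hk⟩ => ⟨(k : G), hk⟩) ?_
  rintro ⟨S⟩
  exact ⟨Quot.mk _ S, rfl⟩

lemma numOrbits_le_card_of_forall_exists_smul_eq {P : Finset Ω → Prop} (R : Finset (Finset Ω))
    (hR : ∀ T ∈ R, P T) (hcover : ∀ S, P S → ∃ T ∈ R, ∃ g : G, g • T = S) :
    numOrbits G P ≤ #R := by
  rw [← Nat.card_eq_finsetCard]
  refine Nat.card_le_card_of_surjective (fun T : R => Quot.mk _ ⟨T.1, hR T.1 T.2⟩) ?_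
  rintro ⟨S⟩
  obtain ⟨T, hT, g, hg⟩ := hcover S S.2
  exact ⟨⟨T, hT⟩, Quot.sound ⟨g, hg⟩⟩

lemma exists_smul_eq_of_numOrbits_le_one [Finite Ω] {P : Finset Ω → Prop}
    (h : numOrbits G P ≤ 1) {S T : Finset Ω} (hS : P S) (hT : P T) : ∃ g : G, g • S = T := by
  have : Subsingleton (Quot (FinsetOrbitRel G P)) := Finite.card_le_one_iff_subsingleton.mp h
  exact quot_mk_finsetOrbitRel_eq_iff.mp
    (Subsingleton.elim (Quot.mk (FinsetOrbitRel G P) ⟨S, hS⟩) (Quot.mk _ ⟨T, hT⟩))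

lemma card_le_numOrbits_of_invariant_s10 [Finite Ω] {β : Type*} {P : Finset Ω → Prop}
    (φ : Finset Ω → β) (hφ : ∀ (g : G) S, φ (g • S) = φ S) (V : Finset β)
    (hV : ∀ v ∈ V, ∃ S, P S ∧ φ S = v) : #V ≤ numOrbits G P := by
  choose S hS hφS using hV
  rw [← Nat.card_eq_finsetCard]
  refine Nat.card_le_card_of_injective (fun v : V => Quot.mk _ ⟨S v v.2, hS v v.2⟩) ?_
  rintro ⟨v, hv⟩ ⟨w, hw⟩ h
  obtain ⟨g, hg⟩ := quot_mk_finsetOrbitRel_eq_iff.mp h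
  have := congrArg φ hg
  rw [hφ, hφS, hφS] at this
  exact Subtype.ext this

lemma numOrbits_eq_add [Finite Ω] (P Q : Finset Ω → Prop) (hQ : ∀ (g : G) S, Q (g • S) ↔ Q S) :
    numOrbits G P = numOrbits G (fun S => P S ∧ Q S) + numOrbits G (fun S => P S ∧ ¬ Q S) := by
  rw [numOrbits_eq_card_quot, numOrbits_eq_card_quot, numOrbits_eq_card_quot, ← Nat.card_sum]
  symm
  refine Nat.card_eq_of_bijective (Sum.elim
    (Quot.map (fun S => ⟨S.1, S.2.1⟩) fun _ _ h => h)
    (Quot.map (fun S => ⟨S.1, S.2.1⟩) fun _ _ h => h)) ⟨?_, ?_⟩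
  · have hQ' : ∀ (g : G) {S T}, g • S = T → (Q S ↔ Q T) := fun g S T h => h ▸ (hQ g S).symm
    rintro (S | S) (T | T) h <;> induction S using Quot.ind <;> induction T using Quot.ind <;>
      rename_i S T <;> obtain ⟨g, hg⟩ := quot_mk_finsetOrbitRel_eq_iff.mp h
    · exact congrArg Sum.inl (Quot.sound ⟨g, hg⟩)
    · exact absurd ((hQ' g hg).mp S.2.2) T.2.2
    · exact absurd ((hQ' g hg).mpr T.2.2) S.2.2
    · exact congrArg Sum.inr (Quot.sound ⟨g, hg⟩)
  · rintro ⟨S⟩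
    by_cases h : Q S.1
    · exact ⟨Sum.inl (Quot.mk _ ⟨S.1, S.2, h⟩), rfl⟩
    · exact ⟨Sum.inr (Quot.mk _ ⟨S.1, S.2, h⟩), rfl⟩

end OrbitCounting

section LivingstoneWagner

variable {Ω : Type*} [DecidableEq Ω]

def sumErase (A : Finset Ω) (f : Finset Ω → ℚ) (S : Finset Ω) : ℚ :=
  ∑ x ∈ S ∩ A, f (S.erase x)

def sumInsert (A : Finset Ω) (f : Finset Ω → ℚ) (S : Finset Ω) : ℚ :=
  ∑ x ∈ A \ S, f (insert x S)

lemma sumInsert_sumErase (A : Finset Ω) {m : ℕ} (f : Finset Ω → ℚ) {S : Finset Ω}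
    (hS : #(S ∩ A) = m) :
    sumInsert A (sumErase A f) S = sumErase A (sumInsert A f) S + (#A - 2 * m : ℚ) * f S := by
  have hins : ∀ x ∈ A \ S, sumErase A f (insert x S)
      = f S + ∑ y ∈ S ∩ A, f (insert x (S.erase y)) := by
    intro x hx
    rw [mem_sdiff] at hx
    rw [sumErase, insert_inter_of_mem hx.1, sum_insert (fun h => hx.2 (mem_inter.mp h).1),
      erase_insert hx.2]
    congr 1
    refine sum_congr rfl fun y hy => ?_
    rw [erase_insert_of_ne fun h : x = y => hx.2 (h ▸ (mem_inter.mp hy).1)]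
  have hers : ∀ y ∈ S ∩ A, sumInsert A f (S.erase y)
      = f S + ∑ x ∈ A \ S, f (insert x (S.erase y)) := by
    intro y hy
    rw [mem_inter] at hy
    rw [sumInsert, sdiff_erase hy.2, sum_insert (fun h => (mem_sdiff.mp h).2 hy.1),
      insert_erase hy.1]
  have hcard : (#(A \ S) : ℚ) = #A - m := by
    rw [← hS, inter_comm, eq_sub_iff_add_eq]
    exact_mod_cast card_sdiff_add_card_inter A S
  rw [sumInsert, sumErase, sum_congr rfl hins, sum_congr rfl hers, sum_add_distrib,
    sum_add_distrib, sum_const, sum_const, sum_comm, nsmul_eq_mul, nsmul_eq_mul, hcard, hS]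
  ring

lemma sumErase_apply_smul {G : Type*} [Group G] [MulAction G Ω] {A : Finset Ω}
    (hA : ∀ g : G, g • A = A) {F : Finset Ω → ℚ} (hF : ∀ (g : G) S, F (g • S) = F S)
    (g : G) (S : Finset Ω) : sumErase A F (g • S) = sumErase A F S := by
  rw [sumErase, ← hA g, ← smul_finset_inter, smul_finset_def,
    sum_image fun x _ y _ h => MulAction.injective g h, hA g]
  refine sum_congr rfl fun x _ => ?_
  rw [← hF g (S.erase x), erase_eq, erase_eq, smul_finset_sdiff, smul_finset_singleton]

section

variable [Fintype Ω] (A : Finset Ω) (R : Finset Ω → Prop) [DecidablePred R]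

lemma sum_sumErase_mul (m : ℕ) (f g : Finset Ω → ℚ) :
    ∑ S with #(S ∩ A) = m + 1 ∧ R (S \ A), sumErase A f S * g S
      = ∑ T with #(T ∩ A) = m ∧ R (T \ A), f T * sumInsert A g T := by
  simp only [sumErase, sumInsert, sum_mul, mul_sum]
  rw [sum_sigma', sum_sigma']
  refine sum_nbij' (fun p => ⟨p.1.erase p.2, p.2⟩) (fun p => ⟨insert p.2 p.1, p.2⟩)
    ?_ ?_ ?_ ?_ ?_
  · rintro ⟨S, x⟩ hp
    simp only [mem_sigma, mem_filter, mem_univ, true_and, mem_inter] at hp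
    obtain ⟨⟨hS, hR⟩, hxS, hxA⟩ := hp
    simp only [mem_sigma, mem_filter, mem_univ, true_and, mem_sdiff, mem_erase, ne_eq,
      not_true_eq_false, false_and, not_false_eq_true, and_true, erase_inter,
      card_erase_of_mem (mem_inter.mpr ⟨hxS, hxA⟩), hS, add_tsub_cancel_right, hxA]
    rwa [erase_sdiff_comm, erase_eq_of_notMem (by simp [hxA])]
  · rintro ⟨T, x⟩ hp
    simp only [mem_sigma, mem_filter, mem_univ, true_and, mem_sdiff] at hp
    obtain ⟨⟨hT, hR⟩, hxA, hxT⟩ := hp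
    simp only [mem_sigma, mem_filter, mem_univ, mem_insert_self, and_self, insert_inter_of_mem hxA,
      insert_sdiff_of_mem _ hxA, hR, card_insert_of_notMem (fun h => hxT (mem_inter.mp h).1), hT]
  · rintro ⟨S, x⟩ hp
    simp only [mem_sigma, mem_inter] at hp
    simp [insert_erase hp.2.1]
  · rintro ⟨T, x⟩ hp
    simp only [mem_sigma, mem_sdiff] at hp
    simp [erase_insert hp.2.2]
  · rintro ⟨S, x⟩ hp
    simp only [mem_sigma, mem_inter] at hp
    simp only [insert_erase hp.2.1]

lemma sum_mul_sumErase_sumInsert_nonneg (m : ℕ) (F : Finset Ω → ℚ) :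
    0 ≤ ∑ T with #(T ∩ A) = m ∧ R (T \ A), F T * sumErase A (sumInsert A F) T := by
  rcases m with _ | m
  · refine sum_nonneg fun T hT => le_of_eq ?_
    rw [mem_filter, card_eq_zero] at hT
    rw [sumErase, hT.2.1, sum_empty, mul_zero]
  · simp_rw [mul_comm (F _), sum_sumErase_mul]
    exact sum_nonneg fun T _ => mul_self_nonneg _

/-- The positivity argument behind the Livingstone–Wagner inequality: `sumInsert ∘ sumErase`
exceeds `sumErase ∘ sumInsert` by the positive multiple `#A - 2m` of the identity. -/
lemma eq_zero_of_sumErase_eq_zero {m : ℕ} (hm : 2 * m < #A) (F : Finset Ω → ℚ)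
    (hF : ∀ S, #(S ∩ A) = m + 1 → R (S \ A) → sumErase A F S = 0)
    {T : Finset Ω} (hTA : #(T ∩ A) = m) (hTR : R (T \ A)) : F T = 0 := by
  have hsq : ∑ T with #(T ∩ A) = m ∧ R (T \ A), F T * F T = 0 := by
    have hzero : ∑ T with #(T ∩ A) = m ∧ R (T \ A), F T * sumInsert A (sumErase A F) T = 0 := by
      rw [← sum_sumErase_mul]
      refine sum_eq_zero fun S hS => ?_
      rw [mem_filter] at hS
      rw [hF S hS.2.1 hS.2.2, mul_zero]
    have hsplit : ∑ T with #(T ∩ A) = m ∧ R (T \ A), F T * sumInsert A (sumErase A F) T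
        = ∑ T with #(T ∩ A) = m ∧ R (T \ A), F T * sumErase A (sumInsert A F) T
          + (#A - 2 * m : ℚ) * ∑ T with #(T ∩ A) = m ∧ R (T \ A), F T * F T := by
      rw [mul_sum, ← sum_add_distrib]
      refine sum_congr rfl fun T hT => ?_
      rw [sumInsert_sumErase A F (mem_filter.mp hT).2.1]
      ring
    have hpos : (0 : ℚ) < #A - 2 * m := by
      rw [sub_pos]
      exact_mod_cast hm
    have := sum_mul_sumErase_sumInsert_nonneg A R m F
    have := sum_nonneg fun T (_ : T ∈ ({T | #(T ∩ A) = m ∧ R (T \ A)} : Finset _)) =>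
      mul_self_nonneg (F T)
    nlinarith
  rw [sum_eq_zero_iff_of_nonneg fun T _ => mul_self_nonneg (F T)] at hsq
  exact mul_self_eq_zero.mp (hsq T (by simp [hTA, hTR]))

end

lemma natCard_le_natCard_of_injective_linearMap {α β : Type*} [Finite α] [Finite β]
    {L : (α → ℚ) →ₗ[ℚ] (β → ℚ)} (hL : Function.Injective L) : Nat.card α ≤ Nat.card β := by
  have := Fintype.ofFinite α
  have := Fintype.ofFinite β
  have := LinearMap.finrank_le_finrank_of_injective hL
  rwa [Module.finrank_fintype_fun_eq_card, Module.finrank_fintype_fun_eq_card,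
    ← Nat.card_eq_fintype_card, ← Nat.card_eq_fintype_card] at this

variable {G : Type*} [Group G] [MulAction G Ω]

open scoped Classical in
noncomputable def orbitFunExtend (P : Finset Ω → Prop) (f : Quot (FinsetOrbitRel G P) → ℚ)
    (S : Finset Ω) : ℚ :=
  if h : P S then f (Quot.mk _ ⟨S, h⟩) else 0

lemma orbitFunExtend_of_mem {P : Finset Ω → Prop} (f : Quot (FinsetOrbitRel G P) → ℚ)
    {S : Finset Ω} (h : P S) : orbitFunExtend P f S = f (Quot.mk _ ⟨S, h⟩) :=
  dif_pos h

lemma orbitFunExtend_apply_smul {P : Finset Ω → Prop} (hP : ∀ (g : G) S, P S → P (g • S))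
    (f : Quot (FinsetOrbitRel G P) → ℚ) (g : G) (S : Finset Ω) :
    orbitFunExtend P f (g • S) = orbitFunExtend P f S := by
  by_cases h : P S
  · rw [orbitFunExtend_of_mem f h, orbitFunExtend_of_mem f (hP g S h)]
    exact congrArg f (Quot.sound ⟨g⁻¹, inv_smul_smul g S⟩)
  · have h' : ¬ P (g • S) := fun h' => h (by simpa using hP g⁻¹ _ h')
    simp only [orbitFunExtend, dif_neg h, dif_neg h']

lemma orbitFunExtend_add {P : Finset Ω → Prop} (f f' : Quot (FinsetOrbitRel G P) → ℚ) :
    orbitFunExtend P (f + f') = orbitFunExtend P f + orbitFunExtend P f' := by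
  ext S
  by_cases h : P S <;> simp [orbitFunExtend, h]

lemma orbitFunExtend_smul {P : Finset Ω → Prop} (c : ℚ)
    (f : Quot (FinsetOrbitRel G P) → ℚ) :
    orbitFunExtend P (c • f) = c • orbitFunExtend P f := by
  ext S
  by_cases h : P S <;> simp [orbitFunExtend, h]

/-- **Livingstone–Wagner**, relative to an invariant set `A`: the map sending a function on the
orbits of the `m`-th layer to its `sumErase` on the orbits of the next layer is injective. -/
theorem numOrbits_le_numOrbits_succ [Fintype Ω] {A : Finset Ω}
    (hA : ∀ g : G, g • A = A) (R : Finset Ω → Prop) (hR : ∀ (g : G) C, R C → R (g • C))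
    {m : ℕ} (hm : 2 * m < #A) :
    numOrbits G (fun S => #(S ∩ A) = m ∧ R (S \ A))
      ≤ numOrbits G (fun S => #(S ∩ A) = m + 1 ∧ R (S \ A)) := by
  classical
  set P : ℕ → Finset Ω → Prop := fun k S => #(S ∩ A) = k ∧ R (S \ A)
  have hP (k : ℕ) (g : G) (S : Finset Ω) (hS : P k S) : P k (g • S) :=
    ⟨by rw [smul_finset_inter_of_smul_eq (hA g), card_smul_finset, hS.1],
      by simpa only [smul_finset_sdiff_of_smul_eq (hA g)] using hR g _ hS.2⟩
  let L :
      (Quot (FinsetOrbitRel G (P m)) → ℚ) →ₗ[ℚ] (Quot (FinsetOrbitRel G (P (m + 1))) → ℚ) :=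
    { toFun f q := sumErase A (orbitFunExtend (P m) f) q.out.1
      map_add' f f' := by
        ext q
        simp only [orbitFunExtend_add, sumErase, Pi.add_apply, sum_add_distrib]
      map_smul' c f := by
        ext q
        simp only [orbitFunExtend_smul, sumErase, Pi.smul_apply, smul_eq_mul,
          RingHom.id_apply, mul_sum] }
  show Nat.card (Quot (FinsetOrbitRel G (P m))) ≤ Nat.card (Quot (FinsetOrbitRel G (P (m + 1))))
  refine natCard_le_natCard_of_injective_linearMap (L := L) ?_
  rw [← LinearMap.ker_eq_bot, LinearMap.ker_eq_bot']
  intro f hf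
  have hvanish (S : Finset Ω) (hSA : #(S ∩ A) = m + 1) (hSR : R (S \ A)) :
      sumErase A (orbitFunExtend (P m) f) S = 0 := by
    obtain ⟨g, hg⟩ : ∃ g : G,
        g • (Quot.mk (FinsetOrbitRel G (P (m + 1))) ⟨S, hSA, hSR⟩).out.1 = S :=
      quot_mk_finsetOrbitRel_eq_iff.mp (Quot.out_eq _)
    rw [← hg, sumErase_apply_smul hA (orbitFunExtend_apply_smul (hP m) f)]
    exact congrFun hf _
  ext ⟨T⟩
  rw [← orbitFunExtend_of_mem f T.2]
  exact eq_zero_of_sumErase_eq_zero A R hm _ hvanish T.2.1 T.2.2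

end LivingstoneWagner

section Layers

open MulAction

variable {Ω : Type*} [DecidableEq Ω] {G : Type*} [Group G] [MulAction G Ω] {A : Finset Ω}
  {c : Ω}

-- In the notation of the header, `α_m` and `τ_m` count the orbits on `InLayer A m 0` and
-- `InLayer A m 1`.
def InLayer (A : Finset Ω) (m j : ℕ) (S : Finset Ω) : Prop :=
  #(S ∩ A) = m ∧ #(S \ A) = j

lemma inLayer_zero_iff {S : Finset Ω} {m : ℕ} : InLayer A m 0 S ↔ S ⊆ A ∧ #S = m := by
  rw [InLayer, card_eq_zero, sdiff_eq_empty_iff_subset, and_comm]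
  exact and_congr_right fun h => by rw [inter_eq_left.mpr h]

lemma inLayer_inter_self {S : Finset Ω} {m : ℕ} (h : #(S ∩ A) = m) : InLayer A m 0 (S ∩ A) :=
  ⟨by rw [inter_assoc, inter_self, h], by rw [sdiff_eq_empty_iff_subset.mpr inter_subset_right,
    card_empty]⟩

lemma insert_inter_of_sdiff_eq_singleton {S : Finset Ω} (h : S \ A = {c}) :
    insert c (S ∩ A) = S := by
  rw [insert_eq, ← h, sdiff_union_inter]

lemma sdiff_eq_singleton_of_mem {S : Finset Ω} (hcA : c ∉ A) (hcS : c ∈ S) (h : #(S \ A) = 1) :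
    S \ A = {c} :=
  (eq_of_subset_of_card_le (singleton_subset_iff.mpr (mem_sdiff.mpr ⟨hcS, hcA⟩))
    (by rw [h, card_singleton])).symm

lemma inLayer_one_insert (hcA : c ∉ A) {m : ℕ} {X : Finset Ω} (hX : InLayer A m 0 X) :
    InLayer A m 1 (insert c X) := by
  obtain ⟨hm, h0⟩ := hX
  refine ⟨by rw [insert_inter_of_notMem hcA, hm], ?_⟩
  rw [insert_sdiff_of_notMem _ hcA, card_eq_zero.mp h0, insert_empty, card_singleton]

lemma insert_inter_of_subset (hcA : c ∉ A) {X : Finset Ω} (hX : X ⊆ A) : insert c X ∩ A = X := by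
  rw [insert_inter_of_notMem hcA, inter_eq_left.mpr hX]

lemma numOrbits_inLayer_one_mem_eq (hA : ∀ g : G, g • A = A) (hcA : c ∉ A)
    (hc : ∀ g : G, g • c = c) (m : ℕ) :
    numOrbits G (fun S => InLayer A m 1 S ∧ c ∈ S) = numOrbits G (InLayer A m 0) := by
  refine (numOrbits_eq_of_equivariant (insert c) (· ∩ A)
    (fun g X => by rw [smul_finset_insert, hc]) (fun g S => smul_finset_inter_of_smul_eq (hA g) S)
    (fun X hX => ⟨inLayer_one_insert hcA hX, mem_insert_self c X⟩) ?_ ?_ ?_).symm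
  · exact fun S hS => inLayer_inter_self hS.1.1
  · exact fun X hX => insert_inter_of_subset hcA (inLayer_zero_iff.mp hX).1
  · rintro S ⟨⟨-, h1⟩, hcS⟩
    exact insert_inter_of_sdiff_eq_singleton (sdiff_eq_singleton_of_mem hcA hcS h1)

lemma numOrbits_inLayer_one_le_card {K : Type*} [Group K] [MulAction K Ω] {R : Finset Ω}
    (hRA : R ⊆ A) (hcover : ∀ y ∈ A, ∃ r ∈ R, y ∈ orbit K r) :
    numOrbits K (InLayer A 1 0) ≤ #R := by
  refine (numOrbits_le_card_of_forall_exists_smul_eq (R.image singleton) ?_ ?_).trans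
    card_image_le
  · intro T hT
    obtain ⟨r, hr, rfl⟩ := mem_image.mp hT
    exact inLayer_zero_iff.mpr ⟨singleton_subset_iff.mpr (hRA hr), card_singleton r⟩
  · intro S hS
    obtain ⟨hSA, hS1⟩ := inLayer_zero_iff.mp hS
    obtain ⟨y, rfl⟩ := card_eq_one.mp hS1
    obtain ⟨r, hr, k, hk⟩ := hcover y (singleton_subset_iff.mp hSA)
    exact ⟨{r}, mem_image_of_mem _ hr, k, by rw [smul_finset_singleton, ← hk]⟩

lemma smul_filter_mem_orbit {K : Type*} [Group K] [MulAction K Ω] (hA : ∀ k : K, k • A = A)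
    (x : Ω) [DecidablePred (· ∈ orbit K x)] (k : K) :
    k • A.filter (· ∈ orbit K x) = A.filter (· ∈ orbit K x) := by
  ext y
  rw [← inv_smul_mem_iff, mem_filter, mem_filter]
  exact and_congr (smul_mem_iff_of_smul_eq (hA _))
    (by rw [← orbit_eq_iff, orbit_smul, orbit_eq_iff])

variable [Fintype Ω]

lemma smul_finset_compl (g : G) (S : Finset Ω) : g • Sᶜ = (g • S)ᶜ :=
  coe_injective (by push_cast; exact Set.smul_set_compl)

lemma numOrbits_card_eq_add (hA : ∀ g : G, g • A = A) (hAc : #Aᶜ = 2) (m : ℕ) :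
    numOrbits G (fun S : Finset Ω => #S = m + 2) = numOrbits G (InLayer A (m + 2) 0)
      + numOrbits G (InLayer A (m + 1) 1) + numOrbits G (InLayer A m 2) := by
  have hQ (j : ℕ) (g : G) (S : Finset Ω) : #(g • S \ A) = j ↔ #(S \ A) = j := by
    rw [smul_finset_sdiff_of_smul_eq (hA g), card_smul_finset]
  have hcard (S : Finset Ω) : #(S ∩ A) + #(S \ A) = #S ∧ #(S \ A) ≤ 2 :=
    ⟨card_inter_add_card_sdiff S A,
      hAc ▸ card_le_card fun x hx => mem_compl.mpr (mem_sdiff.mp hx).2⟩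
  have e0 : (fun S => #S = m + 2 ∧ #(S \ A) = 0) = InLayer A (m + 2) 0 := by
    ext S; have := hcard S; simp only [InLayer]; omega
  have e1 : (fun S => (#S = m + 2 ∧ ¬#(S \ A) = 0) ∧ #(S \ A) = 1) = InLayer A (m + 1) 1 := by
    ext S; have := hcard S; simp only [InLayer]; omega
  have e2 : (fun S => (#S = m + 2 ∧ ¬#(S \ A) = 0) ∧ ¬#(S \ A) = 1) = InLayer A m 2 := by
    ext S; have := hcard S; simp only [InLayer]; omega
  rw [numOrbits_eq_add _ (fun S => #(S \ A) = 0) (hQ 0), e0,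
    numOrbits_eq_add (fun S => #S = m + 2 ∧ ¬#(S \ A) = 0) (fun S => #(S \ A) = 1) (hQ 1),
    e1, e2, add_assoc]

lemma numOrbits_inLayer_card_compl (hA : ∀ g : G, g • A = A) (m : ℕ) :
    numOrbits G (InLayer A m #Aᶜ) = numOrbits G (InLayer A m 0) := by
  refine numOrbits_eq_of_equivariant (· ∩ A) (· ∪ Aᶜ)
    (fun g S => smul_finset_inter_of_smul_eq (hA g) S)
    (fun g T => by rw [smul_finset_union, smul_finset_compl, hA]) ?_ ?_ ?_ ?_
  · exact fun S hS => inLayer_inter_self hS.1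
  · intro T hT
    rw [inLayer_zero_iff] at hT
    refine ⟨?_, ?_⟩
    · rw [union_inter_distrib_right, inter_comm Aᶜ, inter_compl, union_empty, ← hT.2,
        inter_eq_left.mpr hT.1]
    · rw [union_sdiff_distrib, sdiff_eq_empty_iff_subset.mpr hT.1, empty_union,
        sdiff_eq_inter_compl, inter_self]
  · rintro S ⟨-, hc⟩
    have : S \ A = Aᶜ :=
      eq_of_subset_of_card_le (fun x hx => mem_compl.mpr (mem_sdiff.mp hx).2) hc.ge
    rw [← this, union_comm, sdiff_union_inter]
  · intro T hT
    rw [union_inter_distrib_right, inter_comm Aᶜ, inter_compl, union_empty,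
      inter_eq_left.mpr (inLayer_zero_iff.mp hT).1]

lemma numOrbits_inLayer_le_succ (hA : ∀ g : G, g • A = A) (j : ℕ) {m : ℕ} (hm : 2 * m < #A) :
    numOrbits G (InLayer A m j) ≤ numOrbits G (InLayer A (m + 1) j) :=
  numOrbits_le_numOrbits_succ hA (fun C => #C = j) (fun g C h => by rwa [card_smul_finset]) hm

lemma numOrbits_inLayer_eq_of_numOrbits_card_eq (hA : ∀ g : G, g • A = A) (hAc : #Aᶜ = 2)
    {m : ℕ} (hm : 2 * m + 4 < #A)
    (hO : numOrbits G (fun S : Finset Ω => #S = m + 2)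
      = numOrbits G (fun S : Finset Ω => #S = m + 3)) :
    numOrbits G (InLayer A (m + 2) 0) = numOrbits G (InLayer A (m + 3) 0) ∧
      numOrbits G (InLayer A (m + 1) 1) = numOrbits G (InLayer A (m + 2) 1) ∧
      numOrbits G (InLayer A m 0) = numOrbits G (InLayer A (m + 1) 0) := by
  have hc (k : ℕ) : numOrbits G (InLayer A k 2) = numOrbits G (InLayer A k 0) :=
    hAc ▸ numOrbits_inLayer_card_compl hA k
  have e₁ := numOrbits_card_eq_add hA hAc m
  have e₂ : numOrbits G (fun S : Finset Ω => #S = m + 3) = numOrbits G (InLayer A (m + 3) 0)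
      + numOrbits G (InLayer A (m + 2) 1) + numOrbits G (InLayer A (m + 1) 2) :=
    numOrbits_card_eq_add hA hAc (m + 1)
  rw [hc] at e₁
  rw [hc, ← hO] at e₂
  have : numOrbits G (InLayer A (m + 2) 0) ≤ numOrbits G (InLayer A (m + 3) 0) :=
    numOrbits_inLayer_le_succ hA 0 (by omega)
  have : numOrbits G (InLayer A (m + 1) 1) ≤ numOrbits G (InLayer A (m + 2) 1) :=
    numOrbits_inLayer_le_succ hA 1 (by omega)
  have := numOrbits_inLayer_le_succ hA 0 (m := m) (by omega)
  omega

lemma three_le_numOrbits_inLayer_two {K : Type*} [Group K] [MulAction K Ω] {X : Finset Ω}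
    (hX : ∀ k : K, k • X = X) (hXA : X ⊆ A) (hX2 : 2 ≤ #X) (hAX2 : 2 ≤ #(A \ X)) :
    3 ≤ numOrbits K (InLayer A 2 0) := by
  obtain ⟨x₁, hx₁, x₂, hx₂, hx⟩ := one_lt_card.mp hX2
  obtain ⟨y₁, hy₁, y₂, hy₂, hy⟩ := one_lt_card.mp hAX2
  rw [mem_sdiff] at hy₁ hy₂
  have hpair {u v : Ω} (hu : u ∈ A) (hv : v ∈ A) (huv : u ≠ v) : InLayer A 2 0 {u, v} :=
    inLayer_zero_iff.mpr ⟨insert_subset hu (singleton_subset_iff.mpr hv), card_pair huv⟩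
  have hxy : x₁ ≠ y₁ := fun h => hy₁.2 (h ▸ hx₁)
  refine le_trans (by rfl) (card_le_numOrbits_of_invariant_s10 (fun S => #(S ∩ X))
    (fun k S => by rw [smul_finset_inter_of_smul_eq (hX k), card_smul_finset]) {0, 1, 2} ?_)
  simp only [mem_insert, mem_singleton, forall_eq_or_imp, forall_eq]
  refine ⟨⟨{y₁, y₂}, hpair hy₁.1 hy₂.1 hy, ?_⟩, ⟨{x₁, y₁}, hpair (hXA hx₁) hy₁.1 hxy, ?_⟩,
    ⟨{x₁, x₂}, hpair (hXA hx₁) (hXA hx₂) hx, ?_⟩⟩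
  · simp [insert_inter_of_notMem hy₁.2, hy₂.2]
  · simp [insert_inter_of_mem hx₁, hy₁.2]
  · simp [insert_inter_of_mem hx₁, hx₂, hx]

end Layers

section TwoPointComplement

open MulAction

variable {Ω : Type*} [DecidableEq Ω] [Fintype Ω] {G : Type*} [Group G] [MulAction G Ω]
  {A : Finset Ω} {a b : Ω}

lemma smul_fix_or_swap (hA : ∀ g : G, g • A = A) (hAc : Aᶜ = {a, b}) (hab : a ≠ b) (g : G) :
    (g • a = a ∧ g • b = b) ∨ (g • a = b ∧ g • b = a) := by
  have hmem {x : Ω} (hx : x ∈ Aᶜ) : g • x = a ∨ g • x = b := by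
    have : g • x ∈ ({a, b} : Finset Ω) := by
      rw [← hAc, mem_compl, smul_mem_iff_of_smul_eq (hA g)]
      exact mem_compl.mp hx
    simpa using this
  have hne : g • a ≠ g • b := (MulAction.injective g).ne hab
  rcases hmem (x := a) (by simp [hAc]) with ha | ha <;>
    rcases hmem (x := b) (by simp [hAc]) with hb | hb
  all_goals first
    | exact absurd (ha.trans hb.symm) hne
    | exact .inl ⟨ha, hb⟩
    | exact .inr ⟨ha, hb⟩

lemma numOrbits_inLayer_one_of_fix (hA : ∀ g : G, g • A = A) (hAc : Aᶜ = {a, b}) (hab : a ≠ b)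
    (hfix : ∀ g : G, g • a = a) (m : ℕ) :
    numOrbits G (InLayer A m 1) = 2 * numOrbits G (InLayer A m 0) := by
  have haA : a ∉ A := mem_compl.mp (by simp [hAc])
  have hbA : b ∉ A := mem_compl.mp (by simp [hAc])
  have hfixb (g : G) : g • b = b :=
    ((smul_fix_or_swap hA hAc hab g).resolve_right fun h => hab ((hfix g).symm.trans h.1)).2
  have hnotmem : (fun S => InLayer A m 1 S ∧ a ∉ S) = (fun S => InLayer A m 1 S ∧ b ∈ S) := by
    ext S
    refine and_congr_right fun h => ?_
    obtain ⟨y, hy⟩ := card_eq_one.mp h.2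
    have hyAc : y ∈ Aᶜ := mem_compl.mpr (mem_sdiff.mp (hy ▸ mem_singleton_self y)).2
    have hmem {x : Ω} (hx : x ∉ A) : x ∈ S ↔ x = y := by
      rw [← mem_singleton, ← hy, mem_sdiff, and_iff_left hx]
    rw [hmem haA, hmem hbA]
    rw [hAc, mem_insert, mem_singleton] at hyAc
    rcases hyAc with rfl | rfl
    · exact ⟨fun h => absurd rfl h, fun h => absurd h hab.symm⟩
    · exact ⟨fun _ => rfl, fun _ => hab⟩
  rw [numOrbits_eq_add _ (a ∈ ·) fun g S => by rw [← hfix g, smul_mem_smul_finset_iff, hfix],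
    hnotmem, numOrbits_inLayer_one_mem_eq hA haA hfix, numOrbits_inLayer_one_mem_eq hA hbA hfixb,
    two_mul]

lemma numOrbits_inLayer_one_eq_stabilizer (hA : ∀ g : G, g • A = A) (hAc : Aᶜ = {a, b})
    (hab : a ≠ b) {σ : G} (hσ : σ • a = b) (m : ℕ) :
    numOrbits G (InLayer A m 1) = numOrbits (stabilizer G a) (InLayer A m 0) := by
  have haA : a ∉ A := mem_compl.mp (by simp [hAc])
  refine (numOrbits_eq_of_map (insert a) (fun X => inLayer_one_insert haA)
    (fun X Y hX hY => ⟨?_, ?_⟩) ?_).symm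
  · rintro ⟨k, rfl⟩
    exact ⟨k, by rw [Subgroup.smul_def, smul_finset_insert, mem_stabilizer_iff.mp k.2]⟩
  · rintro ⟨g, hg⟩
    have hY : Y ⊆ A := (inLayer_zero_iff.mp hY).1
    have hga : g • a = a := by
      have : g • a ∈ insert a Y := hg ▸ smul_mem_smul_finset (mem_insert_self a X)
      refine (mem_insert.mp this).resolve_right fun h => haA ?_
      exact (smul_mem_iff_of_smul_eq (hA g)).mp (hY h)
    refine ⟨⟨g, hga⟩, ?_⟩
    rw [smul_finset_insert, hga] at hg
    have hgX : a ∉ g • X := fun h => haA <| by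
      rw [← hA g]; exact smul_finset_subset_smul_finset_iff.mpr (inLayer_zero_iff.mp hX).1 h
    show g • X = Y
    rw [← erase_insert hgX, hg, erase_insert fun h => haA (hY h)]
  · intro T hT
    obtain ⟨y, hy⟩ := card_eq_one.mp hT.2
    have hyAc : y ∈ Aᶜ := mem_compl.mpr (mem_sdiff.mp (hy ▸ mem_singleton_self y)).2
    rw [hAc, mem_insert, mem_singleton] at hyAc
    obtain ⟨g, hg⟩ : ∃ g : G, g • a = y := by
      rcases hyAc with rfl | rfl
      exacts [⟨1, one_smul _ _⟩, ⟨σ, hσ⟩]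
    refine ⟨g⁻¹ • T ∩ A, inLayer_inter_self ?_, g, ?_⟩
    · rw [smul_finset_inter_of_smul_eq (hA g⁻¹), card_smul_finset, hT.1]
    · rw [smul_finset_insert, hg, smul_finset_inter_of_smul_eq (hA g⁻¹), smul_inv_smul,
        insert_inter_of_sdiff_eq_singleton hy]

lemma stabilizer_normal (hA : ∀ g : G, g • A = A) (hAc : Aᶜ = {a, b}) (hab : a ≠ b) :
    (stabilizer G a).Normal where
  conj_mem k hk g := by
    rw [mem_stabilizer_iff] at hk ⊢
    have hkb := ((smul_fix_or_swap hA hAc hab k).resolve_right fun h => hab (hk.symm.trans h.1)).2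
    rw [mul_smul, mul_smul]
    rcases smul_fix_or_swap hA hAc hab g with ⟨ha, -⟩ | ⟨-, hb⟩
    · rw [inv_smul_eq_iff.mpr ha.symm, hk, ha]
    · rw [inv_smul_eq_iff.mpr hb.symm, hkb, hb]

lemma mem_orbit_stabilizer_or (hA : ∀ g : G, g • A = A) (hAc : Aᶜ = {a, b}) (hab : a ≠ b)
    {σ : G} (hσ : σ • a = b) {x : Ω} (htrans : ∀ y ∈ A, ∃ g : G, g • x = y) :
    ∀ y ∈ A, y ∈ orbit (stabilizer G a) x ∨ y ∈ orbit (stabilizer G a) (σ • x) := by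
  have hσb : σ • b = a :=
    ((smul_fix_or_swap hA hAc hab σ).resolve_left fun h => hab (h.1.symm.trans hσ)).2
  intro y hy
  obtain ⟨g, rfl⟩ := htrans y hy
  rcases smul_fix_or_swap hA hAc hab g with ⟨ha, -⟩ | ⟨-, hb⟩
  · exact .inl ⟨⟨g, ha⟩, rfl⟩
  · refine .inr ⟨⟨g * σ⁻¹, ?_⟩, ?_⟩
    · rw [mem_stabilizer_iff, mul_smul, inv_smul_eq_iff.mpr hσb.symm, hb]
    · show (g * σ⁻¹) • σ • x = g • x
      rw [mul_smul, inv_smul_smul]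

lemma sdiff_filter_mem_orbit_stabilizer (hA : ∀ g : G, g • A = A) (hAc : Aᶜ = {a, b})
    (hab : a ≠ b) {σ : G} (hσ : σ • a = b) {x : Ω} (htrans : ∀ y ∈ A, ∃ g : G, g • x = y)
    (hx : σ • x ∉ orbit (stabilizer G a) x) [DecidablePred (· ∈ orbit (stabilizer G a) x)] :
    A \ A.filter (· ∈ orbit (stabilizer G a) x) = σ • A.filter (· ∈ orbit (stabilizer G a) x) := by
  have := stabilizer_normal hA hAc hab
  have hcover := mem_orbit_stabilizer_or hA hAc hab hσ htrans
  ext y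
  rw [mem_sdiff, ← inv_smul_mem_iff, mem_filter, mem_filter, smul_mem_iff_of_smul_eq (hA _),
    ← Set.mem_smul_set_iff_inv_smul_mem, smul_orbit_eq_orbit_smul]
  refine and_congr_right fun hy =>
    ⟨fun h => (hcover y hy).resolve_left fun h' => h ⟨hy, h'⟩, fun h h' => hx ?_⟩
  rw [← orbit_eq_iff, ← orbit_eq_iff.mpr h, orbit_eq_iff]
  exact h'.2

/-- The stabilizer of `a` has index at most two, and if it is intransitive on `A` then its two
orbits are swapped by `σ`; so it has two orbits on points of `A` but at least three on pairs. -/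
lemma numOrbits_stabilizer_inLayer_one_le_one (hA : ∀ g : G, g • A = A) (hAc : Aᶜ = {a, b})
    (hab : a ≠ b) {σ : G} (hσ : σ • a = b) (htrans : ∀ x ∈ A, ∀ y ∈ A, ∃ g : G, g • x = y)
    (hA4 : 4 ≤ #A) (h12 : numOrbits (stabilizer G a) (InLayer A 1 0)
      = numOrbits (stabilizer G a) (InLayer A 2 0)) :
    numOrbits (stabilizer G a) (InLayer A 1 0) ≤ 1 := by
  classical
  set K := stabilizer G a
  have := stabilizer_normal hA hAc hab
  obtain ⟨x₀, hx₀⟩ : A.Nonempty := card_pos.mp (by omega)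
  have hσx₀ : σ • x₀ ∈ A := (smul_mem_iff_of_smul_eq (hA σ)).mpr hx₀
  have hcover := mem_orbit_stabilizer_or hA hAc hab hσ (htrans x₀ hx₀)
  by_contra! hgt
  have hdisj : σ • x₀ ∉ orbit K x₀ := fun h => by
    refine hgt.not_ge ((numOrbits_inLayer_one_le_card (singleton_subset_iff.mpr hx₀) ?_).trans
      (card_singleton x₀).le)
    intro y hy
    refine ⟨x₀, mem_singleton_self x₀, ?_⟩
    rcases hcover y hy with h' | h'
    · exact h'
    · rwa [orbit_eq_iff.mpr h] at h'
  set X := A.filter (· ∈ orbit K x₀)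
  have hAX : A \ X = σ • X :=
    sdiff_filter_mem_orbit_stabilizer hA hAc hab hσ (htrans x₀ hx₀) hdisj
  have hcard : #(A \ X) = #X := by rw [hAX, card_smul_finset]
  have hsum : #(A \ X) + #X = #A := card_sdiff_add_card_eq_card (filter_subset _ _)
  have h2 : numOrbits K (InLayer A 1 0) ≤ 2 :=
    (numOrbits_inLayer_one_le_card (insert_subset hx₀ (singleton_subset_iff.mpr hσx₀))
      fun y hy => (hcover y hy).elim (⟨x₀, by simp, ·⟩) (⟨σ • x₀, by simp, ·⟩)).trans card_le_two
  have hX : ∀ k : K, k • X = X := smul_filter_mem_orbit (fun k : K => hA k) x₀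
  have h3 := three_le_numOrbits_inLayer_two hX (filter_subset _ _) (by omega) (by omega)
  omega

lemma numOrbits_inLayer_two_le_one (hA : ∀ g : G, g • A = A) (hAc : Aᶜ = {a, b}) (hab : a ≠ b)
    (hA4 : 4 ≤ #A) (h1 : numOrbits G (InLayer A 1 0) ≤ 1)
    (h12 : numOrbits G (InLayer A 1 1) = numOrbits G (InLayer A 2 1)) :
    numOrbits G (InLayer A 2 0) ≤ 1 := by
  by_cases hswap : ∃ σ : G, σ • a = b
  · obtain ⟨σ, hσ⟩ := hswap
    have htrans (x : Ω) (hx : x ∈ A) (y : Ω) (hy : y ∈ A) : ∃ g : G, g • x = y := by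
      have hpt {z : Ω} (hz : z ∈ A) : InLayer A 1 0 {z} :=
        inLayer_zero_iff.mpr ⟨singleton_subset_iff.mpr hz, card_singleton z⟩
      obtain ⟨g, hg⟩ := exists_smul_eq_of_numOrbits_le_one h1 (hpt hx) (hpt hy)
      exact ⟨g, by rwa [smul_finset_singleton, singleton_inj] at hg⟩
    rw [numOrbits_inLayer_one_eq_stabilizer hA hAc hab hσ,
      numOrbits_inLayer_one_eq_stabilizer hA hAc hab hσ] at h12
    calc numOrbits G (InLayer A 2 0)
        ≤ numOrbits (MulAction.stabilizer G a) (InLayer A 2 0) :=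
          numOrbits_le_numOrbits_subgroup _ _
      _ = numOrbits (MulAction.stabilizer G a) (InLayer A 1 0) := h12.symm
      _ ≤ 1 := numOrbits_stabilizer_inLayer_one_le_one hA hAc hab hσ htrans hA4 h12
  · have hfix (g : G) : g • a = a :=
      ((smul_fix_or_swap hA hAc hab g).resolve_right fun h => hswap ⟨g, h.1⟩).1
    rw [numOrbits_inLayer_one_of_fix hA hAc hab hfix,
      numOrbits_inLayer_one_of_fix hA hAc hab hfix] at h12
    omega

theorem numOrbits_inLayer_le_one_of_numOrbits_card_eq (hA : ∀ g : G, g • A = A)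
    (hAc : #Aᶜ = 2) {d : ℕ} (hd : 3 ≤ d) (hdA : 2 * d ≤ #A)
    (hO : ∀ k, 2 ≤ k → k ≤ d →
      numOrbits G (fun S : Finset Ω => #S = k) = numOrbits G (fun S : Finset Ω => #S = 2)) :
    numOrbits G (InLayer A d 0) ≤ 1 := by
  have hstep (m : ℕ) (hm : m + 3 ≤ d) := numOrbits_inLayer_eq_of_numOrbits_card_eq (m := m) hA hAc
    (by omega) ((hO _ (by omega) (by omega)).trans (hO _ (by omega) (by omega)).symm)
  have h0 : numOrbits G (InLayer A 0 0) ≤ 1 :=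
    numOrbits_le_card_of_forall_exists_smul_eq {∅} (by simp [InLayer]) fun S hS =>
      ⟨∅, mem_singleton_self _, 1, by rw [card_eq_zero.mp (inLayer_zero_iff.mp hS).2, one_smul]⟩
  obtain ⟨a, b, hab, hAab⟩ := card_eq_two.mp hAc
  have h2 := numOrbits_inLayer_two_le_one hA hAab hab (by omega) ((hstep 0 hd).2.2 ▸ h0)
    (hstep 0 hd).2.1
  suffices ∀ j, 2 ≤ j → j ≤ d → numOrbits G (InLayer A j 0) = numOrbits G (InLayer A 2 0) by
    rw [this d (by omega) le_rfl]
    exact h2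
  intro j hj
  induction j, hj using Nat.le_induction with
  | base => exact fun _ => rfl
  | succ j hj ih =>
    intro hjd
    obtain ⟨m, rfl⟩ : ∃ m, j = m + 2 := ⟨j - 2, by omega⟩
    rw [← (hstep m hjd).1, ih (by omega)]

end TwoPointComplement

theorem stmt10_general (n d : ℕ)
    (H : Subgroup (Equiv.Perm (Fin n))) (a b : Fin n)
    (ha : (a : ℕ) = n - 2) (hb : (b : ℕ) = n - 1)
    (hstab : ∀ h ∈ H, h • ({a, b} : Finset (Fin n)) = {a, b})
    (hd1 : 3 ≤ d) (hd2 : 2 * d ≤ n - 2)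
    (hO : ∀ k, 2 ≤ k → k ≤ d →
      numOrbits H (fun S : Finset (Fin n) => S.card = k)
        = numOrbits H (fun S : Finset (Fin n) => S.card = 2)) :
    IsHomogeneousOn H ({a, b} : Finset (Fin n))ᶜ d := by
  have hab : a ≠ b := fun h => by have := congrArg Fin.val h; omega
  have hA (g : H) : g • ({a, b} : Finset (Fin n))ᶜ = {a, b}ᶜ := by
    rw [smul_finset_compl, Subgroup.smul_def, hstab g g.2]
  have hAcard : #({a, b} : Finset (Fin n))ᶜ = n - 2 := by
    rw [card_compl, card_pair hab, Fintype.card_fin]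
  have h1 := numOrbits_inLayer_le_one_of_numOrbits_card_eq hA (by rw [compl_compl, card_pair hab])
    hd1 (hAcard ▸ hd2) hO
  intro S T hS hT hSd hTd
  obtain ⟨g, hg⟩ := exists_smul_eq_of_numOrbits_le_one h1 (inLayer_zero_iff.mpr ⟨hS, hSd⟩)
    (inLayer_zero_iff.mpr ⟨hT, hTd⟩)
  exact ⟨g, g.2, hg⟩

/-- If `H ≤ S_n` (`n ≥ 8`) stabilizes the set `{n-1, n}` (the last two points, here
`a` and `b`) setwise, and `O_2(H) = ⋯ = O_d(H)` for some `3 ≤ d ≤ (n-2)/2`, then `H`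
acts `d`-homogeneously on the remaining `n - 2` points. -/
theorem stmt10 (n d : ℕ) (hn : 8 ≤ n)
    (H : Subgroup (Equiv.Perm (Fin n))) (a b : Fin n)
    (ha : (a : ℕ) = n - 2) (hb : (b : ℕ) = n - 1)
    (hstab : ∀ h ∈ H, h • ({a, b} : Finset (Fin n)) = {a, b})
    (hd1 : 3 ≤ d) (hd2 : 2 * d ≤ n - 2)
    (hO : ∀ k, 2 ≤ k → k ≤ d →
      numOrbits H (fun S : Finset (Fin n) => S.card = k)
        = numOrbits H (fun S : Finset (Fin n) => S.card = 2)) :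
    IsHomogeneousOn H ({a, b} : Finset (Fin n))ᶜ d :=
  stmt10_general n d H a b ha hb hstab hd1 hd2 hO
end

section
/- Let m ≥ 5 and let S = Sym(Fin m) and T = Sym(Fin 2). Let H ≤ S × T be a subgroup whose projection to T is surjective. If the projection of H to S equals S, then H = S × T or H = {(σ, τ) ∈ S × T : sgn(σ) = sgn(τ)}. If the projection of H to S equals the alternating group Alt(Fin m), then H = Alt(Fin m) × T. -/
/-!
Let `N = {σ | (σ, 1) ∈ H}` (Mathlib's `goursatFst`). Since `Sym(Fin 2)` is abelian, `N` contains
every commutator of the projection of `H` to `Sym(Fin m)`, and since `Alt(Fin m)` is perfect for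
`m ≥ 5`, `N` contains `Alt(Fin m)`. If the projection is `Alt(Fin m)`, it lies in `N`, so `H` is
the product of its projections. If the projection is all of `Sym(Fin m)`, then
`{τ | (1, τ) ∈ H}` is trivial or everything: in the second case `H` is everything, in the first
the second coordinate of an element of `H` depends only on the sign of the first, and
surjectivity onto `Sym(Fin 2)` forces it to be that sign.
-/

open Equiv Equiv.Perm

namespace Subgroup

section Prod

variable {G K : Type*} [Group G] [Group K] {H : Subgroup (G × K)}

theorem commutator_map_fst_le_goursatFst [IsMulCommutative K] :
    ⁅H.map (MonoidHom.fst G K), H.map (MonoidHom.fst G K)⁆ ≤ H.goursatFst := by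
  rw [commutator_le]
  rintro _ ⟨p, hp, rfl⟩ _ ⟨q, hq, rfl⟩
  have hpq : p * q * p⁻¹ * q⁻¹ ∈ H :=
    mul_mem (mul_mem (mul_mem hp hq) (inv_mem hp)) (inv_mem hq)
  rw [mem_goursatFst]
  convert hpq using 1
  ext
  · simp [commutatorElement_def]
  · simp [mul_comm' p.2 q.2]

theorem eq_prod_map_of_map_fst_le_goursatFst (h : H.map (MonoidHom.fst G K) ≤ H.goursatFst) :
    H = (H.map (MonoidHom.fst G K)).prod (H.map (MonoidHom.snd G K)) := by
  refine le_antisymm (le_prod_iff.mpr ⟨le_rfl, le_rfl⟩) ?_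
  rintro ⟨g, _⟩ ⟨hg, ⟨q, hq, rfl⟩⟩
  have hgq : (g * q.1⁻¹, (1 : K)) ∈ H :=
    mem_goursatFst.mp (h (mul_mem hg (inv_mem ⟨q, hq, rfl⟩)))
  simpa [Prod.mul_def] using mul_mem hgq hq

theorem eq_prod_map_of_map_snd_le_goursatSnd (h : H.map (MonoidHom.snd G K) ≤ H.goursatSnd) :
    H = (H.map (MonoidHom.fst G K)).prod (H.map (MonoidHom.snd G K)) := by
  refine le_antisymm (le_prod_iff.mpr ⟨le_rfl, le_rfl⟩) ?_
  rintro ⟨_, k⟩ ⟨⟨q, hq, rfl⟩, hk⟩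
  have hqk : ((1 : G), q.2⁻¹ * k) ∈ H :=
    mem_goursatSnd.mp (h (mul_mem (inv_mem ⟨q, hq, rfl⟩) hk))
  simpa [Prod.mul_def] using mul_mem hq hqk

theorem snd_eq_of_inv_mul_fst_mem_goursatFst (hK : H.goursatSnd = ⊥) {x y : G × K}
    (hx : x ∈ H) (hy : y ∈ H) (h : x.1⁻¹ * y.1 ∈ H.goursatFst) : x.2 = y.2 := by
  have : x.2⁻¹ * y.2 ∈ H.goursatSnd := by
    rw [mem_goursatSnd]
    simpa [Prod.mul_def] using mul_mem (inv_mem (mem_goursatFst.mp h)) (mul_mem (inv_mem hx) hy)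
  rwa [hK, mem_bot, inv_mul_eq_one] at this

end Prod

variable {α : Type*} [Fintype α] [DecidableEq α]

theorem alternatingGroup_le_goursatFst {K : Type*} [Group K] [IsMulCommutative K]
    {H : Subgroup (Perm α × K)} (h5 : 5 ≤ Nat.card α)
    (h : alternatingGroup α ≤ H.map (MonoidHom.fst (Perm α) K)) :
    alternatingGroup α ≤ H.goursatFst :=
  calc alternatingGroup α = ⁅alternatingGroup α, alternatingGroup α⁆ :=
        (commutator_alternatingGroup_eq_self h5).symm
    _ ≤ ⁅H.map (MonoidHom.fst (Perm α) K), H.map (MonoidHom.fst (Perm α) K)⁆ :=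
        commutator_mono h h
    _ ≤ H.goursatFst := commutator_map_fst_le_goursatFst

theorem coe_eq_setOf_sign_eq_sign {H : Subgroup (Perm α × Perm (Fin 2))}
    (hA : alternatingGroup α ≤ H.goursatFst)
    (hfst : H.map (MonoidHom.fst (Perm α) (Perm (Fin 2))) = ⊤)
    (hsnd : H.map (MonoidHom.snd (Perm α) (Perm (Fin 2))) = ⊤) (hK : H.goursatSnd = ⊥) :
    (H : Set (Perm α × Perm (Fin 2))) = {p | sign p.1 = sign p.2} := by
  have snd_eq : ∀ x ∈ H, ∀ y ∈ H, sign x.1 = sign y.1 → x.2 = y.2 := fun x hx y hy h ↦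
    snd_eq_of_inv_mul_fst_mem_goursatFst hK hx hy (hA (by simp [mem_alternatingGroup, h]))
  obtain ⟨y, hy, hy2 : y.2 = swap 0 1⟩ := hsnd.ge (mem_top (swap 0 1))
  have hy1 : sign y.1 = -1 := by
    refine (Int.units_eq_one_or _).resolve_left fun h ↦ ?_
    have := snd_eq y hy 1 H.one_mem (by simp [h])
    simp [hy2] at this
  have sign_eq : ∀ x ∈ H, sign x.1 = sign x.2 := by
    intro x hx
    rcases Int.units_eq_one_or (sign x.1) with h | h
    · simp [h, snd_eq x hx 1 H.one_mem (by simp [h])]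
    · simp [h, snd_eq x hx y hy (h.trans hy1.symm), hy2]
  ext x
  refine ⟨sign_eq x, fun hx ↦ ?_⟩
  obtain ⟨z, hz, hz1 : z.1 = x.1⟩ := hfst.ge (mem_top x.1)
  have sign_injective : ∀ a b : Perm (Fin 2), sign a = sign b → a = b := by decide
  have hz2 : z.2 = x.2 := sign_injective _ _ (by rw [← sign_eq z hz, hz1, hx])
  simpa [← Prod.ext hz1 hz2] using hz

end Subgroup

/-- Goursat-type classification: let `m ≥ 5`, `S = Sym(Fin m)`, `T = Sym(Fin 2)`, and
`H ≤ S × T` a subgroup with surjective projection to `T`. If the projection of `H` to `S`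
is all of `S`, then `H = S × T` or `H` is the fiber product
`{(σ, τ) : sgn σ = sgn τ}`. If the projection of `H` to `S` is `Alt(Fin m)`, then
`H = Alt(Fin m) × T`. -/
theorem stmt13 (m : ℕ) (hm : 5 ≤ m)
    (H : Subgroup (Equiv.Perm (Fin m) × Equiv.Perm (Fin 2)))
    (hsnd : H.map (MonoidHom.snd (Equiv.Perm (Fin m)) (Equiv.Perm (Fin 2))) = ⊤) :
    ((H.map (MonoidHom.fst (Equiv.Perm (Fin m)) (Equiv.Perm (Fin 2))) = ⊤) →
      (H = ⊤ ∨ (H : Set (Equiv.Perm (Fin m) × Equiv.Perm (Fin 2)))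
          = {p | Equiv.Perm.sign p.1 = Equiv.Perm.sign p.2})) ∧
    ((H.map (MonoidHom.fst (Equiv.Perm (Fin m)) (Equiv.Perm (Fin 2)))
        = alternatingGroup (Fin m)) →
      H = (alternatingGroup (Fin m)).prod (⊤ : Subgroup (Equiv.Perm (Fin 2)))) := by
  have : IsMulCommutative (Perm (Fin 2)) := isMulCommutative_iff_card_le_two.mpr (by simp)
  have h5 : 5 ≤ Nat.card (Fin m) := by simpa using hm
  constructor
  · intro hfst
    have hA := Subgroup.alternatingGroup_le_goursatFst h5 (hfst ▸ le_top)
    have : Fact (Nat.card (Perm (Fin 2))).Prime :=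
      ⟨by rw [Nat.card_perm, Nat.card_fin]; exact Nat.prime_two⟩
    rcases H.goursatSnd.eq_bot_or_eq_top_of_prime_card with hK | hK
    · exact Or.inr (Subgroup.coe_eq_setOf_sign_eq_sign hA hfst hsnd hK)
    · left
      have hsnd_le : H.map (MonoidHom.snd _ _) ≤ H.goursatSnd := hK ▸ le_top
      rw [Subgroup.eq_prod_map_of_map_snd_le_goursatSnd hsnd_le, hfst, hsnd,
        Subgroup.top_prod_top]
  · intro hfst
    have hA := Subgroup.alternatingGroup_le_goursatFst h5 hfst.ge
    have hfst_le : H.map (MonoidHom.fst _ _) ≤ H.goursatFst := hfst ▸ hA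
    rw [Subgroup.eq_prod_map_of_map_fst_le_goursatFst hfst_le, hfst, hsnd]
end
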